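/- arXiv:1610.05837 — 5 statements merged into one kernel-verified Lean document; each statement's English description precedes it below -/
import Mathlib

section
/- Let Γ be a group acting measurably on a measure space (X,ν) and S ⊆ Γ a finite symmetric subset containing the identity. If the action is α-expanding (for every measurable A with ν(A) finite and ν(A) ≤ ν(X)/2 one has ν(S·A) ≥ (1+α)ν(A)), then for every measurable set A with finite measure and ν(A) > ν(X)/2 (with ν(X) finite), ν((S·A)∖A) ≥ (α/(1+α))(ν(X) − ν(A)). -/
/-!
Put `C := (S • A)ᶜ`. It is disjoint from `A`, and `ν(A) > ν(X)/2`, so `ν(C) ≤ ν(X)/2` and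
expansion applies to `C`: `(1 + α) ν(C) ≤ ν(S • C)`. By symmetry of `S`, the new part
`(S • C) \ C` of `S • C` lies in the boundary `(S • A) \ A`, whence `α ν(C) ≤ ν((S • A) \ A)`.
Since `X \ A` is the disjoint union of `(S • A) \ A` and `C`, this gives
`ν(X) - ν(A) ≤ (1 + 1/α) ν((S • A) \ A)`.
-/

open MeasureTheory Pointwise
open scoped ENNReal

namespace Set

variable {Γ X : Type*} [Group Γ] [MulAction Γ X]

theorem smul_compl_smul_diff_subset {T : Set Γ} (hT : ∀ s ∈ T, s⁻¹ ∈ T) (A : Set X) :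
    T • (T • A)ᶜ \ (T • A)ᶜ ⊆ T • A \ A := by
  rintro _ ⟨⟨s, hs, c, hc, rfl⟩, hsc⟩
  refine ⟨not_not.mp hsc, fun hscA => hc ?_⟩
  simpa using smul_mem_smul (hT s hs) hscA

end Set

namespace ENNReal

theorem ofReal_mul_le_of_ofReal_one_add_mul_le {α : ℝ} {c d : ℝ≥0∞} (hα : 0 ≤ α) (hc : c ≠ ⊤)
    (h : ENNReal.ofReal (1 + α) * c ≤ d + c) : ENNReal.ofReal α * c ≤ d := by
  rw [ofReal_add zero_le_one hα, ofReal_one, add_mul, one_mul, add_comm] at h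
  exact (ENNReal.add_le_add_iff_right hc).mp h

theorem ofReal_div_one_add_mul_add_le {α : ℝ} {c d : ℝ≥0∞} (hα : 0 ≤ α)
    (h : ENNReal.ofReal α * c ≤ d) : ENNReal.ofReal (α / (1 + α)) * (d + c) ≤ d := by
  have hfactor : α / (1 + α) = (1 + α)⁻¹ * α := by field_simp
  have hsum : ENNReal.ofReal (α / (1 + α)) + ENNReal.ofReal (1 + α)⁻¹ = 1 := by
    rw [← ofReal_add (by positivity) (by positivity), ← ofReal_one]
    congr 1
    field_simp
    ring
  calc ENNReal.ofReal (α / (1 + α)) * (d + c)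
      = ENNReal.ofReal (α / (1 + α)) * d + ENNReal.ofReal (1 + α)⁻¹ * (ENNReal.ofReal α * c) := by
        rw [mul_add, ← mul_assoc, ← ofReal_mul (by positivity), ← hfactor]
    _ ≤ ENNReal.ofReal (α / (1 + α)) * d + ENNReal.ofReal (1 + α)⁻¹ * d := by gcongr
    _ = d := by rw [← add_mul, hsum, one_mul]

theorem two_mul_le_of_add_le_of_lt_two_mul {a c u : ℝ≥0∞} (h : a + c ≤ u) (hu : u < 2 * a) :
    2 * c ≤ u := by
  have hca : c ≤ a := le_of_not_ge fun hac =>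
    lt_irrefl u (hu.trans_le ((by rw [two_mul]; gcongr : 2 * a ≤ a + c).trans h))
  calc 2 * c = c + c := two_mul c
    _ ≤ a + c := by gcongr
    _ ≤ u := h

end ENNReal

namespace MeasureTheory

variable {Γ X : Type*} [Group Γ] [MulAction Γ X] [MeasurableSpace X] {ν : Measure X}

theorem measure_univ_sub_eq_diff_add_compl {A B : Set X} (hA : MeasurableSet A)
    (hB : MeasurableSet B) (hAB : A ⊆ B) (hAfin : ν A ≠ ⊤) :
    ν Set.univ - ν A = ν (B \ A) + ν Bᶜ := by
  have hcompl : Aᶜ \ B = Bᶜ := by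
    rw [Set.sdiff_eq, Set.inter_eq_right.mpr (Set.compl_subset_compl.mpr hAB)]
  rw [← measure_compl hA hAfin, ← measure_inter_add_sdiff Aᶜ hB, hcompl, Set.inter_comm,
    ← Set.sdiff_eq]

theorem measure_smul_compl_smul_le {T : Set Γ} (hT : ∀ s ∈ T, s⁻¹ ∈ T) (A : Set X) :
    ν (T • (T • A)ᶜ) ≤ ν (T • A \ A) + ν (T • A)ᶜ :=
  calc ν (T • (T • A)ᶜ) ≤ ν (T • (T • A)ᶜ \ (T • A)ᶜ ∪ (T • A)ᶜ) := by
        rw [Set.sdiff_union_self]; exact measure_mono Set.subset_union_left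
    _ ≤ ν (T • A \ A) + ν (T • A)ᶜ := (measure_union_le _ _).trans
        (by gcongr ν ?_ + _; exact Set.smul_compl_smul_diff_subset hT A)

end MeasureTheory

theorem expansion_above_half_general {Γ X : Type*} [Group Γ] [MulAction Γ X]
    [MeasurableSpace X] (ν : Measure X)
    (hmeas : ∀ (g : Γ) (A : Set X), MeasurableSet A → MeasurableSet (g • A))
    (S : Finset Γ) (hS1 : (1 : Γ) ∈ S) (hSsymm : ∀ s ∈ S, s⁻¹ ∈ S)
    (α : ℝ) (hα : 0 < α)
    (hexp : ∀ A : Set X, MeasurableSet A → ν A ≠ ⊤ → 2 * ν A ≤ ν Set.univ →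
      ENNReal.ofReal (1 + α) * ν A ≤ ν (⋃ s ∈ S, s • A))
    (A : Set X) (hA : MeasurableSet A)
    (hAbig : ν Set.univ < 2 * ν A) :
    ENNReal.ofReal (α / (1 + α)) * (ν Set.univ - ν A)
      ≤ ν ((⋃ s ∈ S, s • A) \ A) := by
  have hSB : ∀ B : Set X, ⋃ s ∈ S, s • B = (S : Set Γ) • B := fun B => Set.iUnion_smul_set _ _
  simp only [hSB] at hexp ⊢
  have hB : MeasurableSet ((S : Set Γ) • A) :=
    hSB A ▸ .biUnion S.countable_toSet fun s _ => hmeas s A hA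
  set B := (S : Set Γ) • A
  have hAB : A ⊆ B := by simpa using Set.smul_set_subset_smul (t := A) (Finset.mem_coe.mpr hS1)
  have hXfin : ν Set.univ ≠ ⊤ := (hAbig.trans_le le_top).ne
  have hCfin : ν Bᶜ ≠ ⊤ := measure_ne_top_of_subset (Set.subset_univ _) hXfin
  have hsplit : ν Set.univ - ν A = ν (B \ A) + ν Bᶜ := measure_univ_sub_eq_diff_add_compl hA hB
    hAB (measure_ne_top_of_subset (Set.subset_univ A) hXfin)
  have hCsmall : 2 * ν Bᶜ ≤ ν Set.univ := by
    refine ENNReal.two_mul_le_of_add_le_of_lt_two_mul ?_ hAbig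
    rw [← measure_add_measure_compl hA]
    gcongr
  have hαC : ENNReal.ofReal α * ν Bᶜ ≤ ν (B \ A) :=
    ENNReal.ofReal_mul_le_of_ofReal_one_add_mul_le hα.le hCfin
      ((hexp _ hB.compl hCfin hCsmall).trans (measure_smul_compl_smul_le hSsymm A))
  rw [hsplit]
  exact ENNReal.ofReal_div_one_add_mul_add_le hα.le hαC

/-- If a measurable action of `Γ` on `(X,ν)` is `α`-expanding, then for every measurable
set `A` of finite measure with `ν(A) > ν(X)/2` (and `ν(X)` finite),
`ν((S·A) \ A) ≥ (α/(1+α))(ν(X) − ν(A))`. -/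
theorem expansion_above_half {Γ X : Type*} [Group Γ] [MulAction Γ X]
    [MeasurableSpace X] (ν : Measure X)
    (hmeas : ∀ (g : Γ) (A : Set X), MeasurableSet A → MeasurableSet (g • A))
    (S : Finset Γ) (hS1 : (1 : Γ) ∈ S) (hSsymm : ∀ s ∈ S, s⁻¹ ∈ S)
    (α : ℝ) (hα : 0 < α)
    (hexp : ∀ A : Set X, MeasurableSet A → ν A ≠ ⊤ → 2 * ν A ≤ ν Set.univ →
      ENNReal.ofReal (1 + α) * ν A ≤ ν (⋃ s ∈ S, s • A))
    (hXfin : ν Set.univ ≠ ⊤)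
    (A : Set X) (hA : MeasurableSet A) (hAfin : ν A ≠ ⊤)
    (hAbig : ν Set.univ < 2 * ν A) :
    ENNReal.ofReal (α / (1 + α)) * (ν Set.univ - ν A)
      ≤ ν ((⋃ s ∈ S, s • A) \ A) :=
  expansion_above_half_general ν hmeas S hS1 hSsymm α hα hexp A hA hAbig
end

section
/- If two families of connected graphs 𝒳_n and 𝒴_n, each with degree uniformly bounded by a constant D, are uniformly quasi-isometric (i.e., there exist (L,A)-quasi-isometries f_n : 𝒳_n → 𝒴_n with constants L, A independent of n), then 𝒳_n is a family of expanders if and only if 𝒴_n is. -/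
open Filter

/-- A sequence of finite graphs is a family of expanders: the number of vertices tends to
infinity and there is a uniform `ε > 0` such that every vertex set `A` with
`|A| ≤ |V|/2` satisfies `|∂A| ≥ ε|A|` (external vertex boundary). -/
def IsExpanderFamily {V : ℕ → Type} [∀ n, Fintype (V n)]
    (G : ∀ n, SimpleGraph (V n)) : Prop :=
  Tendsto (fun n => Fintype.card (V n)) atTop atTop ∧
  ∃ ε : ℝ, 0 < ε ∧ ∀ n, ∀ A : Finset (V n), 2 * A.card ≤ Fintype.card (V n) →
    ε * A.card ≤ ({v : V n | v ∉ A ∧ ∃ w ∈ A, (G n).Adj v w}).ncard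

set_option linter.unusedVariables false
set_option linter.unusedSectionVars false

open Finset
open scoped Classical

section ExpanderAux

variable {V : Type} [Fintype V] {W : Type} [Fintype W]

noncomputable def nbhd (G : SimpleGraph V) (T : Finset V) (R : ℕ) : Finset V :=
  Finset.univ.filter (fun v => ∃ t ∈ T, G.dist v t ≤ R)

noncomputable def bdry (G : SimpleGraph V) (T : Finset V) : Finset V :=
  Finset.univ.filter (fun v => v ∉ T ∧ ∃ w ∈ T, G.Adj v w)

lemma mem_nbhd {G : SimpleGraph V} {T : Finset V} {R : ℕ} {v : V} :
    v ∈ nbhd G T R ↔ ∃ t ∈ T, G.dist v t ≤ R := by simp [nbhd]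

lemma mem_bdry {G : SimpleGraph V} {T : Finset V} {v : V} :
    v ∈ bdry G T ↔ v ∉ T ∧ ∃ w ∈ T, G.Adj v w := by simp [bdry]

lemma ncard_eq_bdry {G : SimpleGraph V} (A : Finset V) :
    ({v | v ∉ A ∧ ∃ w ∈ A, G.Adj v w} : Set V).ncard = (bdry G A).card := by
  rw [← Set.ncard_coe_finset]
  congr 1
  ext v
  simp [bdry]

lemma subset_nbhd {G : SimpleGraph V} {T : Finset V} {R : ℕ} : T ⊆ nbhd G T R := by
  intro t ht
  exact mem_nbhd.2 ⟨t, ht, by simp [SimpleGraph.dist_self]⟩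

lemma nbhd_mono {G : SimpleGraph V} {T : Finset V} {r R : ℕ} (h : r ≤ R) :
    nbhd G T r ⊆ nbhd G T R := by
  intro v hv
  obtain ⟨t, ht, hd⟩ := mem_nbhd.1 hv
  exact mem_nbhd.2 ⟨t, ht, hd.trans h⟩

lemma deg_card {G : SimpleGraph V} {D : ℕ} (hdeg : ∀ v, (G.neighborSet v).ncard ≤ D) (v : V) :
    (G.neighborFinset v).card ≤ D := by
  rw [SimpleGraph.neighborFinset_def, ← Set.ncard_eq_toFinset_card']
  exact hdeg v

lemma nbhd_card_succ_le {G : SimpleGraph V} (hG : G.Connected) {D : ℕ}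
    (hdeg : ∀ v, (G.neighborSet v).ncard ≤ D) (T : Finset V) (R : ℕ) :
    (nbhd G T (R + 1)).card ≤ (D + 1) * (nbhd G T R).card := by
  have hsub : nbhd G T (R + 1) ⊆
      nbhd G T R ∪ (nbhd G T R).biUnion (fun u => G.neighborFinset u) := by
    intro v hv
    obtain ⟨t, ht, hdist⟩ := mem_nbhd.1 hv
    by_cases h : G.dist v t ≤ R
    · exact Finset.mem_union_left _ (mem_nbhd.2 ⟨t, ht, h⟩)
    · obtain ⟨p, hp⟩ := ((hG.preconnected) v t).exists_walk_length_eq_dist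
      cases p with
      | nil =>
        exact absurd (by simp [SimpleGraph.dist_self]) h
      | @cons _ u _ hadj q =>
        have hq : G.dist u t ≤ R := by
          have h1 := SimpleGraph.dist_le q
          simp only [SimpleGraph.Walk.length_cons] at hp
          omega
        refine Finset.mem_union_right _ (Finset.mem_biUnion.2 ⟨u, mem_nbhd.2 ⟨t, ht, hq⟩, ?_⟩)
        exact (SimpleGraph.mem_neighborFinset _ _ _).2 hadj.symm
  calc (nbhd G T (R + 1)).card ≤ _ := Finset.card_le_card hsub
    _ ≤ (nbhd G T R).card + ((nbhd G T R).biUnion (fun u => G.neighborFinset u)).card :=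
        Finset.card_union_le _ _
    _ ≤ (nbhd G T R).card + (nbhd G T R).card * D := by
        gcongr
        calc ((nbhd G T R).biUnion (fun u => G.neighborFinset u)).card
            ≤ ∑ u ∈ nbhd G T R, (G.neighborFinset u).card := Finset.card_biUnion_le
          _ ≤ ∑ _u ∈ nbhd G T R, D := Finset.sum_le_sum (fun u _ => deg_card hdeg u)
          _ = (nbhd G T R).card * D := by simp [Finset.sum_const, mul_comm]
    _ = (D + 1) * (nbhd G T R).card := by ring

lemma nbhd_card_le {G : SimpleGraph V} (hG : G.Connected) {D : ℕ}
    (hdeg : ∀ v, (G.neighborSet v).ncard ≤ D) (T : Finset V) (R : ℕ) :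
    (nbhd G T R).card ≤ (D + 1) ^ R * T.card := by
  induction R with
  | zero =>
    have hsub : nbhd G T 0 ⊆ T := by
      intro v hv
      obtain ⟨t, ht, hd⟩ := mem_nbhd.1 hv
      have : G.dist v t = 0 := Nat.le_zero.1 hd
      rwa [(hG.dist_eq_zero_iff).1 this]
    simpa using Finset.card_le_card hsub
  | succ R ih =>
    calc (nbhd G T (R + 1)).card ≤ (D + 1) * (nbhd G T R).card :=
          nbhd_card_succ_le hG hdeg T R
      _ ≤ (D + 1) * ((D + 1) ^ R * T.card) := by gcongr
      _ = (D + 1) ^ (R + 1) * T.card := by ring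


lemma exists_bdry_of_walk {G : SimpleGraph V} (hG : G.Connected) (T : Finset V) :
    ∀ {v t : V} (p : G.Walk v t), v ∉ T → t ∈ T →
      ∃ u ∈ bdry G T, G.dist v u + 1 ≤ p.length := by
  intro v t p
  induction p with
  | nil => intro hv ht; exact absurd ht hv
  | @cons v w t hadj q ih =>
    intro hv ht
    by_cases hw : w ∈ T
    · refine ⟨v, mem_bdry.2 ⟨hv, w, hw, hadj⟩, ?_⟩
      simp [SimpleGraph.dist_self]
    · obtain ⟨u, hu, hlen⟩ := ih hw ht
      refine ⟨u, hu, ?_⟩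
      have h1 : G.dist v u ≤ G.dist v w + G.dist w u := hG.dist_triangle
      have h2 : G.dist v w ≤ 1 := by
        have := SimpleGraph.dist_le (SimpleGraph.Walk.cons hadj SimpleGraph.Walk.nil)
        simpa using this
      simp only [SimpleGraph.Walk.length_cons]
      omega

lemma nbhd_sdiff_subset {G : SimpleGraph V} (hG : G.Connected) (T : Finset V) (R : ℕ) :
    nbhd G T R \ T ⊆ nbhd G (bdry G T) (R - 1) := by
  intro v hv
  obtain ⟨hv1, hv2⟩ := Finset.mem_sdiff.1 hv
  obtain ⟨t, ht, hdist⟩ := mem_nbhd.1 hv1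
  obtain ⟨p, hp⟩ := ((hG.preconnected) v t).exists_walk_length_eq_dist
  obtain ⟨u, hu, hlen⟩ := exists_bdry_of_walk hG T p hv2 ht
  exact mem_nbhd.2 ⟨u, hu, by omega⟩

lemma bdry_compl_card_le {G : SimpleGraph V} {D : ℕ}
    (hdeg : ∀ v, (G.neighborSet v).ncard ≤ D) (S : Finset V) :
    (bdry G (Finset.univ \ S)).card ≤ (D + 1) * (bdry G S).card := by
  set φ : V → V := fun v => if h : ∃ w, w ∉ S ∧ G.Adj v w then h.choose else v with hφ
  apply Finset.card_le_mul_card_image_of_maps_to (f := φ) (t := bdry G S)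
  · intro v hv
    obtain ⟨hv1, w, hw, hadj⟩ := mem_bdry.1 hv
    have hwS : w ∉ S := (Finset.mem_sdiff.1 hw).2
    have hvS : v ∈ S := by
      by_contra hc
      exact hv1 (Finset.mem_sdiff.2 ⟨Finset.mem_univ v, hc⟩)
    have hex : ∃ w, w ∉ S ∧ G.Adj v w := ⟨w, hwS, hadj⟩
    have hspec := hex.choose_spec
    have : φ v = hex.choose := by simp [hφ, dif_pos hex]
    rw [this]
    exact mem_bdry.2 ⟨hspec.1, v, hvS, hspec.2.symm⟩
  · intro b _
    have hsub : (bdry G (Finset.univ \ S)).filter (fun v => φ v = b) ⊆ G.neighborFinset b := by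
      intro v hv
      obtain ⟨hv1, hv2⟩ := Finset.mem_filter.1 hv
      obtain ⟨hv3, w, hw, hadj⟩ := mem_bdry.1 hv1
      have hex : ∃ w, w ∉ S ∧ G.Adj v w := ⟨w, (Finset.mem_sdiff.1 hw).2, hadj⟩
      have hspec := hex.choose_spec
      have hb : φ v = hex.choose := by simp [hφ, dif_pos hex]
      rw [hv2] at hb
      rw [← hb] at hspec
      exact (SimpleGraph.mem_neighborFinset _ _ _).2 hspec.2.symm
    calc _ ≤ (G.neighborFinset b).card := Finset.card_le_card hsub
      _ ≤ D := by
          rw [SimpleGraph.neighborFinset_def, ← Set.ncard_eq_toFinset_card']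
          exact hdeg b
      _ ≤ D + 1 := Nat.le_succ D

/-- Fibers of a map with the lower QI bound are small. -/
lemma card_fiber_le {G : SimpleGraph V} {H : SimpleGraph W} (hG : G.Connected) {D : ℕ}
    (hdeg : ∀ v, (G.neighborSet v).ncard ≤ D) {L A : ℝ} (hL : 1 ≤ L) (f : V → W)
    (hlo : ∀ x x', (1 / L) * G.dist x x' - A ≤ (H.dist (f x) (f x') : ℝ))
    (s : Finset V) (w : W) :
    (s.filter (fun x => f x = w)).card ≤ (D + 1) ^ (⌈L * A⌉₊) := by
  rcases (s.filter (fun x => f x = w)).eq_empty_or_nonempty with h | ⟨x₀, hx₀⟩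
  · simp [h]
  · have hx₀' : f x₀ = w := (Finset.mem_filter.1 hx₀).2
    have hL0 : (0 : ℝ) < L := lt_of_lt_of_le one_pos hL
    have hsub : s.filter (fun x => f x = w) ⊆ nbhd G {x₀} (⌈L * A⌉₊) := by
      intro x hx
      have hx' : f x = w := (Finset.mem_filter.1 hx).2
      have hd : (H.dist (f x) (f x₀) : ℝ) = 0 := by
        rw [hx', ← hx₀']
        norm_num [hx₀', SimpleGraph.dist_self]
      have h1 := hlo x x₀
      rw [hd] at h1
      have h2 : (G.dist x x₀ : ℝ) ≤ L * A := by
        have hdiv : (G.dist x x₀ : ℝ) / L ≤ A := by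
          rw [div_eq_inv_mul, ← one_div]
          linarith
        have := (div_le_iff₀ hL0).1 hdiv
        linarith
      have h3 : (G.dist x x₀ : ℝ) ≤ (⌈L * A⌉₊ : ℝ) := h2.trans (Nat.le_ceil _)
      exact mem_nbhd.2 ⟨x₀, Finset.mem_singleton_self x₀, by exact_mod_cast h3⟩
    calc _ ≤ (nbhd G {x₀} (⌈L * A⌉₊)).card := Finset.card_le_card hsub
      _ ≤ (D + 1) ^ (⌈L * A⌉₊) * ({x₀} : Finset V).card := nbhd_card_le hG hdeg _ _
      _ = (D + 1) ^ (⌈L * A⌉₊) := by simp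

/-- Counting via bounded fibers. -/
lemma card_le_of_fibers {f : V → W} (s : Finset V) (C : ℕ)
    (h : ∀ w, (s.filter (fun x => f x = w)).card ≤ C) :
    s.card ≤ C * Fintype.card W := by
  calc s.card ≤ C * (s.image f).card := Finset.card_le_mul_card_image s C (fun b _ => h b)
    _ ≤ C * Fintype.card W := by
        gcongr
        exact Finset.card_le_card (Finset.subset_univ _)

/-- If every element of `T` is within distance `r` of the image of `S`, then `T` is small. -/
lemma card_le_of_near {H : SimpleGraph W} (hH : H.Connected) {D : ℕ}
    (hdH : ∀ w, (H.neighborSet w).ncard ≤ D) (f : V → W) (S : Finset V) (T : Finset W) (r : ℕ)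
    (h : ∀ t ∈ T, ∃ x ∈ S, H.dist (f x) t ≤ r) :
    T.card ≤ (D + 1) ^ r * S.card := by
  have hsub : T ⊆ nbhd H (S.image f) r := by
    intro t ht
    obtain ⟨x, hx, hd⟩ := h t ht
    exact mem_nbhd.2 ⟨f x, Finset.mem_image_of_mem f hx, by rwa [SimpleGraph.dist_comm]⟩
  calc T.card ≤ (nbhd H (S.image f) r).card := Finset.card_le_card hsub
    _ ≤ (D + 1) ^ r * (S.image f).card := nbhd_card_le hH hdH _ _
    _ ≤ (D + 1) ^ r * S.card := by gcongr; exact Finset.card_image_le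


noncomputable def epsNew (D : ℕ) (L A ε : ℝ) : ℝ :=
  min (1/2)
    ((ε / (((D+1) * (4 * (D+1)^(⌈A⌉₊) * (D+1)^(⌈L*A⌉₊)) : ℕ) : ℝ)) /
      ((((D+1)^(⌈A⌉₊) * (D+1)^(⌈L*A⌉₊) : ℕ)) : ℝ))
    / (((D+1)^(2*(⌈A⌉₊) + (⌈L+A⌉₊ + ⌈A⌉₊) - 1) : ℕ) : ℝ)

lemma epsNew_pos (D : ℕ) (L A : ℝ) {ε : ℝ} (hε : 0 < ε) : 0 < epsNew D L A ε := by
  unfold epsNew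
  have h1 : (0:ℝ) < (((D+1) * (4 * (D+1)^(⌈A⌉₊) * (D+1)^(⌈L*A⌉₊)) : ℕ) : ℝ) := by
    have : 0 < (D+1) * (4 * (D+1)^(⌈A⌉₊) * (D+1)^(⌈L*A⌉₊)) := by positivity
    exact_mod_cast this
  have h2 : (0:ℝ) < ((((D+1)^(⌈A⌉₊) * (D+1)^(⌈L*A⌉₊)) : ℕ) : ℝ) := by
    have : 0 < (D+1)^(⌈A⌉₊) * (D+1)^(⌈L*A⌉₊) := by positivity
    exact_mod_cast this
  have h3 : (0:ℝ) < (((D+1)^(2*(⌈A⌉₊) + (⌈L+A⌉₊ + ⌈A⌉₊) - 1) : ℕ) : ℝ) := by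
    have : 0 < (D+1)^(2*(⌈A⌉₊) + (⌈L+A⌉₊ + ⌈A⌉₊) - 1) := by positivity
    exact_mod_cast this
  exact div_pos (lt_min (by norm_num) (div_pos (div_pos hε h1) h2)) h3

lemma key {V W : Type} [Fintype V] [Fintype W] {G : SimpleGraph V} {H : SimpleGraph W}
    (hG : G.Connected) (hH : H.Connected) {D : ℕ}
    (hdG : ∀ v, (G.neighborSet v).ncard ≤ D) (hdH : ∀ w, (H.neighborSet w).ncard ≤ D)
    {L A : ℝ} (hL : 1 ≤ L) (hA : 0 ≤ A) (f : V → W)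
    (hup : ∀ x x', (H.dist (f x) (f x') : ℝ) ≤ L * G.dist x x' + A)
    (hlo : ∀ x x', (1 / L) * G.dist x x' - A ≤ (H.dist (f x) (f x') : ℝ))
    (hde : ∀ y, ∃ x, (H.dist (f x) y : ℝ) ≤ A)
    {ε : ℝ} (hε : 0 < ε)
    (hexp : ∀ S : Finset V, 2 * S.card ≤ Fintype.card V → ε * S.card ≤ ((bdry G S).card : ℝ))
    (T : Finset W) (hT : 2 * T.card ≤ Fintype.card W) :
    epsNew D L A ε * T.card ≤ ((bdry H T).card : ℝ) := by
  unfold epsNew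
  set F := (D+1)^(⌈L*A⌉₊) with hFdef
  set Cd := (D+1)^(⌈A⌉₊) with hCddef
  set b := ⌈L+A⌉₊ + ⌈A⌉₊ with hbdef
  set R := 2*(⌈A⌉₊) + b with hRdef
  have hD1 : 0 < D + 1 := Nat.succ_pos D
  have hK0pos : 0 < (D+1) * (4 * Cd * F) := by positivity
  have hCFpos : 0 < Cd * F := by positivity
  have hPpos : 0 < (D+1)^(R-1) := by positivity
  have hK0r : (0:ℝ) < (((D+1) * (4 * Cd * F) : ℕ) : ℝ) := by exact_mod_cast hK0pos
  have hCFr : (0:ℝ) < ((Cd * F : ℕ) : ℝ) := by exact_mod_cast hCFpos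
  have hPr : (0:ℝ) < (((D+1)^(R-1) : ℕ) : ℝ) := by exact_mod_cast hPpos
  -- natural-number form of density
  have hdeN : ∀ y : W, ∃ x : V, H.dist (f x) y ≤ ⌈A⌉₊ := by
    intro y
    obtain ⟨x, hx⟩ := hde y
    exact ⟨x, by exact_mod_cast hx.trans (Nat.le_ceil A)⟩
  -- global cardinality comparison
  have hVW : Fintype.card V ≤ F * Fintype.card W := by
    have h := card_le_of_fibers (f := f) Finset.univ F
      (fun w => card_fiber_le hG hdG hL f hlo _ w)
    simpa [Finset.card_univ] using h
  -- the pullback set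
  set S' : Finset V := Finset.univ.filter (fun x => f x ∈ nbhd H T ⌈A⌉₊) with hS'def
  have hTS : T.card ≤ Cd * S'.card := by
    apply card_le_of_near hH hdH f S' T ⌈A⌉₊
    intro t ht
    obtain ⟨x, hx⟩ := hdeN t
    refine ⟨x, ?_, hx⟩
    rw [hS'def]
    simp only [Finset.mem_filter, Finset.mem_univ, true_and]
    exact mem_nbhd.2 ⟨t, ht, hx⟩
  -- main estimate against the R-neighborhood boundary
  have hmain : min (1/2 : ℝ)
      ((ε / (((D+1) * (4 * Cd * F) : ℕ) : ℝ)) / ((Cd * F : ℕ) : ℝ)) * T.card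
      ≤ ((nbhd H T R \ T).card : ℝ) := by
    by_cases hcase : T.card ≤ 2 * (nbhd H T (2*⌈A⌉₊) \ T).card
    · have hsub : nbhd H T (2*⌈A⌉₊) \ T ⊆ nbhd H T R \ T :=
        Finset.sdiff_subset_sdiff (nbhd_mono (by omega)) le_rfl
      have h1 : T.card ≤ 2 * (nbhd H T R \ T).card :=
        hcase.trans (Nat.mul_le_mul_left 2 (Finset.card_le_card hsub))
      have h1r : (T.card : ℝ) ≤ 2 * ((nbhd H T R \ T).card : ℝ) := by exact_mod_cast h1
      calc min (1/2 : ℝ) _ * T.card ≤ (1/2) * T.card := by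
            apply mul_le_mul_of_nonneg_right (min_le_left _ _) (Nat.cast_nonneg _)
        _ ≤ ((nbhd H T R \ T).card : ℝ) := by linarith
    · push_neg at hcase
      set Sc := Finset.univ \ S' with hScdef
      -- the complement of S' is large
      have hcompl : Fintype.card W ≤ 4 * (Cd * Sc.card) := by
        have h1 : (Finset.univ \ nbhd H T (2*⌈A⌉₊)).card ≤ Cd * Sc.card := by
          apply card_le_of_near hH hdH f Sc _ ⌈A⌉₊
          intro y hy
          obtain ⟨x, hx⟩ := hdeN y
          refine ⟨x, ?_, hx⟩
          rw [hScdef]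
          simp only [Finset.mem_sdiff, Finset.mem_univ, true_and]
          rw [hS'def]
          simp only [Finset.mem_filter, Finset.mem_univ, true_and]
          intro hfx
          obtain ⟨t, ht, hd2⟩ := mem_nbhd.1 hfx
          have hyn : y ∉ nbhd H T (2*⌈A⌉₊) := (Finset.mem_sdiff.1 hy).2
          apply hyn
          refine mem_nbhd.2 ⟨t, ht, ?_⟩
          have htri : H.dist y t ≤ H.dist y (f x) + H.dist (f x) t := hH.dist_triangle
          have hyx : H.dist y (f x) ≤ ⌈A⌉₊ := by rw [SimpleGraph.dist_comm]; exact hx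
          omega
        have h2 := Finset.card_sdiff_add_card_inter (nbhd H T (2*⌈A⌉₊)) T
        have h2' : (nbhd H T (2*⌈A⌉₊) ∩ T).card ≤ T.card :=
          Finset.card_le_card (Finset.inter_subset_right)
        have h3 := Finset.card_sdiff_add_card_eq_card (Finset.subset_univ (nbhd H T (2*⌈A⌉₊)))
        rw [Finset.card_univ] at h3
        omega
      have hVc : Fintype.card V ≤ (4 * Cd * F) * Sc.card := by
        calc Fintype.card V ≤ F * Fintype.card W := hVW
          _ ≤ F * (4 * (Cd * Sc.card)) := Nat.mul_le_mul_left F hcompl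
          _ = (4 * Cd * F) * Sc.card := by ring
      -- generalized expansion applied to S'
      have hgen : (ε / (((D+1) * (4 * Cd * F) : ℕ) : ℝ)) * S'.card ≤ ((bdry G S').card : ℝ) := by
        have hK0R : (1:ℝ) ≤ (((D+1) * (4 * Cd * F) : ℕ) : ℝ) := Nat.one_le_cast.mpr hK0pos
        by_cases h2 : 2 * S'.card ≤ Fintype.card V
        · have hh := hexp S' h2
          have hle : ε / (((D+1) * (4 * Cd * F) : ℕ) : ℝ) ≤ ε := div_le_self hε.le hK0R
          calc _ ≤ ε * (S'.card : ℝ) :=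
              mul_le_mul_of_nonneg_right hle (Nat.cast_nonneg _)
            _ ≤ _ := hh
        · push_neg at h2
          have h4 := Finset.card_sdiff_add_card_eq_card (Finset.subset_univ S')
          rw [Finset.card_univ] at h4
          have hScV : 2 * Sc.card ≤ Fintype.card V := by rw [hScdef]; omega
          have hexpc := hexp Sc hScV
          have hbd : (bdry G Sc).card ≤ (D + 1) * (bdry G S').card := by
            rw [hScdef]; exact bdry_compl_card_le hdG S'
          have e1 : ε * (Sc.card : ℝ) ≤ ((D:ℝ)+1) * ((bdry G S').card : ℝ) := by
            calc ε * (Sc.card : ℝ) ≤ ((bdry G Sc).card : ℝ) := hexpc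
              _ ≤ ((D:ℝ)+1) * ((bdry G S').card : ℝ) := by exact_mod_cast hbd
          have e2 : (S'.card : ℝ) ≤ ((4*Cd*F : ℕ) : ℝ) * (Sc.card : ℝ) := by
            have : S'.card ≤ (4*Cd*F) * Sc.card := by
              calc S'.card ≤ Fintype.card V := Finset.card_le_univ S'
                _ ≤ (4*Cd*F) * Sc.card := hVc
            exact_mod_cast this
          rw [div_mul_eq_mul_div, div_le_iff₀ hK0r]
          have hcast : (((D+1) * (4 * Cd * F) : ℕ) : ℝ) = ((D:ℝ)+1) * ((4*Cd*F : ℕ) : ℝ) := by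
            push_cast; ring
          calc ε * (S'.card : ℝ) ≤ ε * (((4*Cd*F : ℕ) : ℝ) * (Sc.card : ℝ)) :=
              mul_le_mul_of_nonneg_left e2 hε.le
            _ = ((4*Cd*F : ℕ) : ℝ) * (ε * (Sc.card : ℝ)) := by ring
            _ ≤ ((4*Cd*F : ℕ) : ℝ) * (((D:ℝ)+1) * ((bdry G S').card : ℝ)) :=
              mul_le_mul_of_nonneg_left e1 (Nat.cast_nonneg _)
            _ = ((bdry G S').card : ℝ) * (((D:ℝ)+1) * ((4*Cd*F : ℕ) : ℝ)) := by ring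
            _ = ((bdry G S').card : ℝ) * (((D+1) * (4 * Cd * F) : ℕ) : ℝ) := by rw [hcast]
      -- pushing the boundary of S' forward
      have hpush : (bdry G S').card ≤ F * (nbhd H T R \ T).card := by
        apply Finset.card_le_mul_card_image_of_maps_to (f := f) (t := nbhd H T R \ T)
        · intro v hv
          obtain ⟨hv1, w, hw, hadj⟩ := mem_bdry.1 hv
          have hfv : f v ∉ nbhd H T ⌈A⌉₊ := by
            intro hc
            apply hv1
            rw [hS'def]
            simp only [Finset.mem_filter, Finset.mem_univ, true_and]
            exact hc
          have hfvT : f v ∉ T := fun hc => hfv (subset_nbhd hc)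
          have hfw : f w ∈ nbhd H T ⌈A⌉₊ := by
            have hw' := hw
            rw [hS'def, Finset.mem_filter] at hw'
            exact hw'.2
          obtain ⟨t, ht, hwt⟩ := mem_nbhd.1 hfw
          have hvw1 : G.dist v w ≤ 1 := by
            have := SimpleGraph.dist_le (SimpleGraph.Walk.cons hadj SimpleGraph.Walk.nil)
            simpa using this
          have hvw1r : (G.dist v w : ℝ) ≤ 1 := by exact_mod_cast hvw1
          have hdist : (H.dist (f v) (f w) : ℝ) ≤ L + A := by
            have h5 := hup v w
            have h6 : L * (G.dist v w : ℝ) ≤ L * 1 :=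
              mul_le_mul_of_nonneg_left hvw1r (by linarith)
            linarith
          have hdN : H.dist (f v) (f w) ≤ ⌈L+A⌉₊ := by
            exact_mod_cast hdist.trans (Nat.le_ceil _)
          have htri : H.dist (f v) t ≤ H.dist (f v) (f w) + H.dist (f w) t := hH.dist_triangle
          refine Finset.mem_sdiff.2 ⟨mem_nbhd.2 ⟨t, ht, ?_⟩, hfvT⟩
          have hRb : R = 2*(⌈A⌉₊) + (⌈L+A⌉₊ + ⌈A⌉₊) := by rw [hRdef, hbdef]
          omega
        · intro w _
          exact card_fiber_le hG hdG hL f hlo _ w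
      -- chaining everything in ℝ
      have c1 : (T.card : ℝ) ≤ (Cd : ℝ) * (S'.card : ℝ) := by exact_mod_cast hTS
      have c2 : ((bdry G S').card : ℝ) ≤ (F : ℝ) * ((nbhd H T R \ T).card : ℝ) := by
        exact_mod_cast hpush
      have hε2pos : 0 < ε / (((D+1) * (4 * Cd * F) : ℕ) : ℝ) := div_pos hε hK0r
      calc min (1/2 : ℝ) ((ε / (((D+1) * (4 * Cd * F) : ℕ) : ℝ)) / ((Cd * F : ℕ) : ℝ)) * T.card
          ≤ ((ε / (((D+1) * (4 * Cd * F) : ℕ) : ℝ)) / ((Cd * F : ℕ) : ℝ)) * T.card :=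
            mul_le_mul_of_nonneg_right (min_le_right _ _) (Nat.cast_nonneg _)
        _ ≤ ((nbhd H T R \ T).card : ℝ) := by
            rw [div_mul_eq_mul_div, div_le_iff₀ hCFr]
            have hcast2 : ((Cd * F : ℕ) : ℝ) = (Cd : ℝ) * (F : ℝ) := by push_cast; ring
            set e2 := ε / (((D+1) * (4 * Cd * F) : ℕ) : ℝ) with he2
            calc e2 * (T.card : ℝ) ≤ e2 * ((Cd : ℝ) * (S'.card : ℝ)) :=
                mul_le_mul_of_nonneg_left c1 hε2pos.le
              _ = (Cd : ℝ) * (e2 * (S'.card : ℝ)) := by ring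
              _ ≤ (Cd : ℝ) * ((bdry G S').card : ℝ) :=
                mul_le_mul_of_nonneg_left hgen (Nat.cast_nonneg _)
              _ ≤ (Cd : ℝ) * ((F : ℝ) * ((nbhd H T R \ T).card : ℝ)) :=
                mul_le_mul_of_nonneg_left c2 (Nat.cast_nonneg _)
              _ = ((nbhd H T R \ T).card : ℝ) * ((Cd * F : ℕ) : ℝ) := by
                  rw [hcast2]; ring
  -- from the R-neighborhood to the actual boundary of T
  have hfin : (nbhd H T R \ T).card ≤ (D+1)^(R-1) * (bdry H T).card := by
    calc (nbhd H T R \ T).card ≤ (nbhd H (bdry H T) (R-1)).card :=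
        Finset.card_le_card (nbhd_sdiff_subset hH T R)
      _ ≤ (D+1)^(R-1) * (bdry H T).card := nbhd_card_le hH hdH _ _
  have hfinr : ((nbhd H T R \ T).card : ℝ) ≤ (((D+1)^(R-1) : ℕ) : ℝ) * ((bdry H T).card : ℝ) := by
    exact_mod_cast hfin
  rw [div_mul_eq_mul_div, div_le_iff₀ hPr]
  calc min (1/2 : ℝ) _ * (T.card : ℝ) ≤ ((nbhd H T R \ T).card : ℝ) := hmain
    _ ≤ (((D+1)^(R-1) : ℕ) : ℝ) * ((bdry H T).card : ℝ) := hfinr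
    _ = ((bdry H T).card : ℝ) * (((D+1)^(R-1) : ℕ) : ℝ) := by ring


end ExpanderAux

lemma transfer_family {V W : ℕ → Type} [∀ n, Fintype (V n)] [∀ n, Fintype (W n)]
    (GX : ∀ n, SimpleGraph (V n)) (GY : ∀ n, SimpleGraph (W n))
    (hcX : ∀ n, (GX n).Connected) (hcY : ∀ n, (GY n).Connected)
    (D : ℕ)
    (hdX : ∀ n (v : V n), ((GX n).neighborSet v).ncard ≤ D)
    (hdY : ∀ n (w : W n), ((GY n).neighborSet w).ncard ≤ D)
    (L A : ℝ) (hL : 1 ≤ L) (hA : 0 ≤ A)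
    (f : ∀ n, V n → W n)
    (hup : ∀ n (x x' : V n),
      ((GY n).dist (f n x) (f n x') : ℝ) ≤ L * (GX n).dist x x' + A)
    (hlo : ∀ n (x x' : V n),
      (1 / L) * (GX n).dist x x' - A ≤ ((GY n).dist (f n x) (f n x') : ℝ))
    (hde : ∀ n (y : W n), ∃ x : V n, ((GY n).dist (f n x) y : ℝ) ≤ A) :
    IsExpanderFamily GX → IsExpanderFamily GY := by
  rintro ⟨htend, ε, hε, hexp⟩
  constructor
  · have hFc : 0 < (D+1)^(⌈L*A⌉₊) := by positivity
    have hcard : ∀ n, Fintype.card (V n) ≤ (D+1)^(⌈L*A⌉₊) * Fintype.card (W n) := by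
      intro n
      have h := card_le_of_fibers (f := f n) Finset.univ ((D+1)^(⌈L*A⌉₊))
        (fun w => card_fiber_le (hcX n) (hdX n) hL (f n) (hlo n) _ w)
      simpa [Finset.card_univ] using h
    rw [tendsto_atTop] at htend ⊢
    intro bb
    filter_upwards [htend ((D+1)^(⌈L*A⌉₊) * bb)] with n hn
    exact Nat.le_of_mul_le_mul_left (le_trans hn (hcard n)) hFc
  · refine ⟨epsNew D L A ε, epsNew_pos D L A hε, fun n T hT => ?_⟩
    rw [ncard_eq_bdry]
    refine key (hcX n) (hcY n) (hdX n) (hdY n) hL hA (f n) (hup n) (hlo n) (hde n) hε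
      (fun S hS => ?_) T hT
    have h := hexp n S hS
    rwa [ncard_eq_bdry] at h


/-- If two families of connected graphs of degree uniformly bounded by `D` are uniformly
quasi-isometric, then one is a family of expanders if and only if the other is. -/
theorem expander_family_qi_invariant
    {V W : ℕ → Type} [∀ n, Fintype (V n)] [∀ n, Fintype (W n)]
    (GX : ∀ n, SimpleGraph (V n)) (GY : ∀ n, SimpleGraph (W n))
    (hconnX : ∀ n, (GX n).Connected) (hconnY : ∀ n, (GY n).Connected)
    (D : ℕ)
    (hdegX : ∀ n (v : V n), ((GX n).neighborSet v).ncard ≤ D)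
    (hdegY : ∀ n (w : W n), ((GY n).neighborSet w).ncard ≤ D)
    (L A : ℝ) (hL : 1 ≤ L) (hA : 0 ≤ A)
    (f : ∀ n, V n → W n)
    (hupper : ∀ n (x x' : V n),
      ((GY n).dist (f n x) (f n x') : ℝ) ≤ L * (GX n).dist x x' + A)
    (hlower : ∀ n (x x' : V n),
      (1 / L) * (GX n).dist x x' - A ≤ ((GY n).dist (f n x) (f n x') : ℝ))
    (hdense : ∀ n (y : W n), ∃ x : V n, ((GY n).dist (f n x) y : ℝ) ≤ A) :
    IsExpanderFamily GX ↔ IsExpanderFamily GY := by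
  have hL0 : (0:ℝ) < L := lt_of_lt_of_le one_pos hL
  constructor
  · exact transfer_family GX GY hconnX hconnY D hdegX hdegY L A hL hA f hupper hlower hdense
  · -- construct the quasi-inverse g
    set g : ∀ n, W n → V n := fun n y => (hdense n y).choose with hgdef
    have hg : ∀ n (y : W n), ((GY n).dist (f n (g n y)) y : ℝ) ≤ A := by
      intro n y
      rw [hgdef]
      exact (hdense n y).choose_spec
    have hA' : (0:ℝ) ≤ 3*L*A := by
      have : (0:ℝ) ≤ L := by linarith
      positivity
    apply transfer_family GY GX hconnY hconnX D hdegY hdegX L (3*L*A) hL hA' g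
    · -- upper bound for g
      intro n y y'
      have h1 := hlower n (g n y) (g n y')
      have t1 : (GY n).dist (f n (g n y)) (f n (g n y')) ≤
          (GY n).dist (f n (g n y)) y + ((GY n).dist y y' + (GY n).dist y' (f n (g n y'))) := by
        calc (GY n).dist (f n (g n y)) (f n (g n y'))
            ≤ (GY n).dist (f n (g n y)) y + (GY n).dist y (f n (g n y')) :=
              (hconnY n).dist_triangle
          _ ≤ _ := by
              have h2 : (GY n).dist y (f n (g n y')) ≤
                  (GY n).dist y y' + (GY n).dist y' (f n (g n y')) := (hconnY n).dist_triangle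
              omega
      have t1r : ((GY n).dist (f n (g n y)) (f n (g n y')) : ℝ) ≤
          ((GY n).dist (f n (g n y)) y : ℝ) + (((GY n).dist y y' : ℝ) +
            ((GY n).dist y' (f n (g n y')) : ℝ)) := by exact_mod_cast t1
      have t2 : ((GY n).dist (f n (g n y)) y : ℝ) ≤ A := hg n y
      have t3 : ((GY n).dist y' (f n (g n y')) : ℝ) ≤ A := by
        rw [SimpleGraph.dist_comm]
        exact hg n y'
      have h7 : ((GX n).dist (g n y) (g n y') : ℝ) / L ≤ ((GY n).dist y y' : ℝ) + 3*A := by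
        rw [div_eq_inv_mul, ← one_div]
        linarith
      have h8 := (div_le_iff₀ hL0).1 h7
      nlinarith
    · -- lower bound for g
      intro n y y'
      have h1 := hupper n (g n y) (g n y')
      have t1 : (GY n).dist y y' ≤
          (GY n).dist y (f n (g n y)) + ((GY n).dist (f n (g n y)) (f n (g n y')) +
            (GY n).dist (f n (g n y')) y') := by
        calc (GY n).dist y y'
            ≤ (GY n).dist y (f n (g n y)) + (GY n).dist (f n (g n y)) y' :=
              (hconnY n).dist_triangle
          _ ≤ _ := by
              have h2 : (GY n).dist (f n (g n y)) y' ≤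
                  (GY n).dist (f n (g n y)) (f n (g n y')) + (GY n).dist (f n (g n y')) y' :=
                (hconnY n).dist_triangle
              omega
      have t1r : ((GY n).dist y y' : ℝ) ≤
          ((GY n).dist y (f n (g n y)) : ℝ) + (((GY n).dist (f n (g n y)) (f n (g n y')) : ℝ) +
            ((GY n).dist (f n (g n y')) y' : ℝ)) := by exact_mod_cast t1
      have t2 : ((GY n).dist y (f n (g n y)) : ℝ) ≤ A := by
        rw [SimpleGraph.dist_comm]
        exact hg n y
      have t3 : ((GY n).dist (f n (g n y')) y' : ℝ) ≤ A := hg n y'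
      have hsum : ((GY n).dist y y' : ℝ) ≤ L * ((GX n).dist (g n y) (g n y') : ℝ) + 3*A := by
        linarith
      have h9 : (1/L) * ((GY n).dist y y' : ℝ) ≤
          (1/L) * (L * ((GX n).dist (g n y) (g n y') : ℝ) + 3*A) :=
        mul_le_mul_of_nonneg_left hsum (by positivity)
      have h10 : (1/L) * (L * ((GX n).dist (g n y) (g n y') : ℝ) + 3*A) =
          ((GX n).dist (g n y) (g n y') : ℝ) + 3*A/L := by
        field_simp
      have h11 : 3*A/L ≤ 3*L*A := by
        rw [div_le_iff₀ hL0]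
        nlinarith [mul_nonneg hA (mul_nonneg (by linarith : (0:ℝ) ≤ L - 1)
          (by linarith : (0:ℝ) ≤ L + 1))]
      linarith
    · -- density for g
      intro n x
      refine ⟨f n x, ?_⟩
      have h1 := hlower n (g n (f n x)) x
      have h2 : ((GY n).dist (f n (g n (f n x))) (f n x) : ℝ) ≤ A := hg n (f n x)
      have h3 : ((GX n).dist (g n (f n x)) x : ℝ) / L ≤ 2*A := by
        rw [div_eq_inv_mul, ← one_div]
        linarith
      have h4 := (div_le_iff₀ hL0).1 h3
      nlinarith [mul_nonneg hA (by linarith : (0:ℝ) ≤ L)]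
end

section
/- Let Γ = ⟨S⟩ be a finitely generated group with a measure-preserving action ρ on a probability space (X,ν), where S is finite, symmetric, and contains the identity. If ρ is not expanding in measure, then the induced isometric action of Γ on L^p_0(X) (1 ≤ p < ∞) has almost invariant vectors: there is a sequence f_n ∈ L^p_0(X)∖{0} with ‖s·f_n − f_n‖_p / ‖f_n‖_p → 0 for every s ∈ S. -/
/-!
Failure of expansion yields measurable sets `A n` with `ν (A n) ≤ 1/2` and
`ν (S • A n) ≤ (1 + ε n) ν (A n)`, `ε n → 0`; take `f n = 1_{A n} - ν (A n)`.
Since `1 ∈ S`, both `A n` and `s • A n` lie in `S • A n` and have the same measure, so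
`ν (s • A n ∆ A n) ≤ 2 ε n ν (A n)`, which is `‖s • f n - f n‖_p ^ p`. On `A n` we have
`|f n| ≥ 1/2`, so `‖f n‖_p ≥ ν (A n) ^ (1/p) / 2`, and the ratio is at most `2 (2 ε n) ^ (1/p)`.
-/

open MeasureTheory Pointwise Filter

open ENNReal Topology symmDiff

theorem measure_symmDiff_le_two_mul_tsub {α : Type*} [MeasurableSpace α] {μ : Measure α}
    {s t u : Set α} (hsu : s ⊆ u) (htu : t ⊆ u) (hs : NullMeasurableSet s μ)
    (ht : NullMeasurableSet t μ) (hst : μ s = μ t) (hfin : μ s ≠ ∞) :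
    μ (s ∆ t) ≤ 2 * (μ u - μ s) := by
  have hdiff_s : μ (u \ s) = μ u - μ s := measure_sdiff hsu hs hfin
  have hdiff_t : μ (u \ t) = μ u - μ s := by rw [measure_sdiff htu ht (hst ▸ hfin), hst]
  calc μ (s ∆ t) ≤ μ (s \ t) + μ (t \ s) := measure_union_le _ _
    _ ≤ μ (u \ t) + μ (u \ s) := by gcongr
    _ = 2 * (μ u - μ s) := by rw [hdiff_s, hdiff_t, two_mul]

section CenteredIndicator

variable {X : Type*} [MeasurableSpace X] {ν : Measure X} {A : Set X}

noncomputable def centeredIndicator (ν : Measure X) (A : Set X) : X → ℝ :=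
  A.indicator (fun _ => 1) - fun _ => ν.real A

theorem memLp_centeredIndicator [IsFiniteMeasure ν] (hA : MeasurableSet A) (p : ℝ≥0∞) :
    MemLp (centeredIndicator ν A) p ν :=
  (memLp_indicator_const p hA 1 (Or.inr (measure_ne_top ν A))).sub (memLp_const _)

theorem integral_centeredIndicator [IsProbabilityMeasure ν] (hA : MeasurableSet A) :
    ∫ x, centeredIndicator ν A x ∂ν = 0 := by
  have hint : Integrable (A.indicator fun _ => (1 : ℝ)) ν :=
    (integrable_indicator_iff hA).2 (integrable_const _).integrableOn
  simp only [centeredIndicator, Pi.sub_apply]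
  rw [integral_sub hint (integrable_const _), integral_indicator_const _ hA]
  simp

theorem le_eLpNorm_centeredIndicator (hA : MeasurableSet A) (hA_half : ν A ≤ 1 / 2)
    {p : ℝ≥0∞} (hp : p ≠ 0) (hp_top : p ≠ ∞) :
    2⁻¹ * ν A ^ (1 / p.toReal) ≤ eLpNorm (centeredIndicator ν A) p ν := by
  have hA_half_real : ν.real A ≤ 1 / 2 := by
    simpa [Measure.real] using ENNReal.toReal_mono (by norm_num) hA_half
  have hle : ∀ x, ‖A.indicator (fun _ => (2⁻¹ : ℝ)) x‖ ≤ ‖centeredIndicator ν A x‖ := by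
    intro x
    by_cases hx : x ∈ A
    · simp only [centeredIndicator, Set.indicator_of_mem hx, Pi.sub_apply,
        Real.norm_eq_abs]
      rw [abs_of_pos (by norm_num), abs_of_nonneg (by linarith)]
      linarith
    · simp [hx]
  calc 2⁻¹ * ν A ^ (1 / p.toReal) = eLpNorm (A.indicator fun _ => (2⁻¹ : ℝ)) p ν := by
        rw [eLpNorm_indicator_const hA hp hp_top, Real.enorm_eq_ofReal (by norm_num),
          ENNReal.ofReal_inv_of_pos (by norm_num)]
        simp
    _ ≤ eLpNorm (centeredIndicator ν A) p ν := eLpNorm_mono hle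

variable {Γ : Type*} [Group Γ] [MulAction Γ X]

theorem centeredIndicator_inv_smul_sub (g : Γ) :
    (fun x => centeredIndicator ν A (g⁻¹ • x) - centeredIndicator ν A x)
      = (g • A).indicator (fun _ => 1) - A.indicator (fun _ => 1) := by
  ext x
  simp only [centeredIndicator, Pi.sub_apply, sub_sub_sub_cancel_right]
  by_cases hx : g⁻¹ • x ∈ A <;> simp [hx, Set.mem_smul_set_iff_inv_smul_mem]

theorem eLpNorm_centeredIndicator_inv_smul_sub_le (g : Γ) (p : ℝ≥0∞) :
    eLpNorm (fun x => centeredIndicator ν A (g⁻¹ • x) - centeredIndicator ν A x) p ν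
      ≤ ν ((g • A) ∆ A) ^ (1 / p.toReal) := by
  rw [centeredIndicator_inv_smul_sub, eLpNorm_indicator_sub_indicator]
  simpa using eLpNorm_indicator_const_le (μ := ν) (s := (g • A) ∆ A) (1 : ℝ) p

theorem measure_smul_symmDiff_le [MeasurableConstSMul Γ X] [SMulInvariantMeasure Γ X ν]
    {S : Finset Γ} (hS1 : 1 ∈ S) {g : Γ} (hg : g ∈ S) (hA : MeasurableSet A) (hA_fin : ν A ≠ ∞) :
    ν ((g • A) ∆ A) ≤ 2 * (ν (⋃ s ∈ S, s • A) - ν A) := by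
  rw [← measure_smul ν g A]
  exact measure_symmDiff_le_two_mul_tsub (fun _ hx => Set.mem_biUnion hg hx)
    (fun _ hx => Set.mem_biUnion hS1 (by rwa [one_smul])) (hA.const_smul g).nullMeasurableSet
    hA.nullMeasurableSet (measure_smul ν g A) (by rwa [measure_smul])

theorem eLpNorm_centeredIndicator_inv_smul_sub_div_le [MeasurableConstSMul Γ X]
    [SMulInvariantMeasure Γ X ν] {S : Finset Γ} (hS1 : 1 ∈ S) {g : Γ} (hg : g ∈ S)
    (hA : MeasurableSet A) (hA_half : ν A ≤ 1 / 2) {ε : ℝ≥0∞}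
    (hA_exp : ν (⋃ s ∈ S, s • A) ≤ (1 + ε) * ν A) {p : ℝ≥0∞} (hp : p ≠ 0) (hp_top : p ≠ ∞) :
    eLpNorm (fun x => centeredIndicator ν A (g⁻¹ • x) - centeredIndicator ν A x) p ν
      / eLpNorm (centeredIndicator ν A) p ν ≤ 2 * (2 * ε) ^ (1 / p.toReal) := by
  have hA_fin : ν A ≠ ∞ := ne_top_of_le_ne_top (by norm_num) hA_half
  have hgrowth : ν (⋃ s ∈ S, s • A) - ν A ≤ ε * ν A := by
    rwa [tsub_le_iff_left, ← one_add_mul]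
  refine ENNReal.div_le_of_le_mul ?_
  calc eLpNorm (fun x => centeredIndicator ν A (g⁻¹ • x) - centeredIndicator ν A x) p ν
      ≤ ν ((g • A) ∆ A) ^ (1 / p.toReal) := eLpNorm_centeredIndicator_inv_smul_sub_le g p
    _ ≤ (2 * ε * ν A) ^ (1 / p.toReal) := by
      gcongr
      calc ν ((g • A) ∆ A) ≤ 2 * (ν (⋃ s ∈ S, s • A) - ν A) :=
            measure_smul_symmDiff_le hS1 hg hA hA_fin
        _ ≤ 2 * ε * ν A := by rw [mul_assoc]; gcongr
    _ = 2 * (2 * ε) ^ (1 / p.toReal) * (2⁻¹ * ν A ^ (1 / p.toReal)) := by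
      rw [ENNReal.mul_rpow_of_nonneg _ _ (by positivity), mul_mul_mul_comm,
        ENNReal.mul_inv_cancel two_ne_zero ofNat_ne_top, one_mul]
    _ ≤ 2 * (2 * ε) ^ (1 / p.toReal) * eLpNorm (centeredIndicator ν A) p ν := by
      gcongr
      exact le_eLpNorm_centeredIndicator hA hA_half hp hp_top

end CenteredIndicator

theorem exists_seq_of_not_expanding {Γ X : Type*} [Group Γ] [MulAction Γ X] [MeasurableSpace X]
    {ν : Measure X} {S : Finset Γ}
    (h : ¬ ∃ α : ℝ, 0 < α ∧ ∀ A : Set X, MeasurableSet A → ν A ≤ 1 / 2 →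
      ENNReal.ofReal (1 + α) * ν A ≤ ν (⋃ s ∈ S, s • A)) :
    ∃ A : ℕ → Set X, ∃ ε : ℕ → ℝ≥0∞, Tendsto ε atTop (𝓝 0) ∧
      ∀ n, MeasurableSet (A n) ∧ ν (A n) ≤ 1 / 2 ∧ 0 < ν (A n) ∧
        ν (⋃ s ∈ S, s • A n) ≤ (1 + ε n) * ν (A n) := by
  push Not at h
  choose A hA_meas hA_half hA_lt using fun n : ℕ => h (1 / ((n : ℝ) + 1)) Nat.one_div_pos_of_nat
  refine ⟨A, fun n => ENNReal.ofReal (1 / ((n : ℝ) + 1)), ?_,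
    fun n => ⟨hA_meas n, hA_half n, ?_, ?_⟩⟩
  · simpa using ENNReal.tendsto_ofReal tendsto_one_div_add_atTop_nhds_zero_nat
  · refine pos_iff_ne_zero.2 fun h0 => ?_
    simpa [h0] using hA_lt n
  · rw [← ENNReal.ofReal_one, ← ENNReal.ofReal_add zero_le_one (by positivity)]
    exact (hA_lt n).le

theorem not_expanding_implies_almost_invariant_vectors_general
    {Γ X : Type*} [Group Γ] [MulAction Γ X] [MeasurableSpace X]
    (ν : Measure X) [IsProbabilityMeasure ν]
    (hmp : ∀ g : Γ, MeasurePreserving (fun x => g • x) ν ν)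
    (S : Finset Γ) (hS1 : (1 : Γ) ∈ S)
    (p : ℝ) (hp : 1 ≤ p)
    (hnotexp : ¬ ∃ α : ℝ, 0 < α ∧ ∀ A : Set X, MeasurableSet A → ν A ≤ 1 / 2 →
      ENNReal.ofReal (1 + α) * ν A ≤ ν (⋃ s ∈ S, s • A)) :
    ∃ f : ℕ → X → ℝ,
      (∀ n, MemLp (f n) (ENNReal.ofReal p) ν) ∧
      (∀ n, ∫ x, f n x ∂ν = 0) ∧
      (∀ n, eLpNorm (f n) (ENNReal.ofReal p) ν ≠ 0) ∧
      (∀ s ∈ S, Tendsto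
        (fun n => eLpNorm (fun x => f n (s⁻¹ • x) - f n x) (ENNReal.ofReal p) ν
          / eLpNorm (f n) (ENNReal.ofReal p) ν) atTop (nhds 0)) := by
  have : MeasurableConstSMul Γ X := ⟨fun g => (hmp g).measurable⟩
  have : SMulInvariantMeasure Γ X ν :=
    ⟨fun g _ hs => (hmp g).measure_preimage hs.nullMeasurableSet⟩
  set q := ENNReal.ofReal p
  have hq0 : q ≠ 0 := (ENNReal.ofReal_pos.2 (by linarith)).ne'
  have hr : 0 < 1 / q.toReal := one_div_pos.2 (ENNReal.toReal_pos hq0 ofReal_ne_top)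
  obtain ⟨A, ε, hε, hA⟩ := exists_seq_of_not_expanding hnotexp
  choose hA_meas hA_half hA_pos hA_exp using hA
  refine ⟨fun n => centeredIndicator ν (A n), fun n => memLp_centeredIndicator (hA_meas n) q,
    fun n => integral_centeredIndicator (hA_meas n), fun n => ?_, fun s hs => ?_⟩
  · have hpos : 0 < 2⁻¹ * ν (A n) ^ (1 / q.toReal) :=
      ENNReal.mul_pos (by norm_num) (ENNReal.rpow_pos (hA_pos n) (measure_ne_top _ _)).ne'
    exact (hpos.trans_le (le_eLpNorm_centeredIndicator (hA_meas n) (hA_half n) hq0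
      ofReal_ne_top)).ne'
  · have hbound : Tendsto (fun n => 2 * (2 * ε n) ^ (1 / q.toReal)) atTop (𝓝 0) := by
      have h := ENNReal.Tendsto.const_mul ((ENNReal.Tendsto.const_mul hε
        (Or.inr ofNat_ne_top) (a := 2)).ennrpow_const (1 / q.toReal)) (Or.inr ofNat_ne_top) (a := 2)
      rwa [mul_zero, ENNReal.zero_rpow_of_pos hr, mul_zero] at h
    exact tendsto_of_tendsto_of_tendsto_of_le_of_le tendsto_const_nhds hbound (fun _ => zero_le)
      fun n => eLpNorm_centeredIndicator_inv_smul_sub_div_le hS1 hs (hA_meas n) (hA_half n)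
        (hA_exp n) hq0 ofReal_ne_top

/-- If a measure-preserving action of `Γ = ⟨S⟩` on a probability space is not expanding in
measure, then the induced isometric action on `L^p_0(X)` (`1 ≤ p < ∞`) has almost invariant
vectors: there is a sequence of nonzero zero-average `L^p` functions `f n` with
`‖s·f n − f n‖_p / ‖f n‖_p → 0` for every `s ∈ S`. -/
theorem not_expanding_implies_almost_invariant_vectors
    {Γ X : Type*} [Group Γ] [MulAction Γ X] [MeasurableSpace X]
    (ν : Measure X) [IsProbabilityMeasure ν]
    (hmp : ∀ g : Γ, MeasurePreserving (fun x => g • x) ν ν)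
    (S : Finset Γ) (hS1 : (1 : Γ) ∈ S) (hSsymm : ∀ s ∈ S, s⁻¹ ∈ S)
    (p : ℝ) (hp : 1 ≤ p)
    (hnotexp : ¬ ∃ α : ℝ, 0 < α ∧ ∀ A : Set X, MeasurableSet A → ν A ≤ 1 / 2 →
      ENNReal.ofReal (1 + α) * ν A ≤ ν (⋃ s ∈ S, s • A)) :
    ∃ f : ℕ → X → ℝ,
      (∀ n, MemLp (f n) (ENNReal.ofReal p) ν) ∧
      (∀ n, ∫ x, f n x ∂ν = 0) ∧
      (∀ n, eLpNorm (f n) (ENNReal.ofReal p) ν ≠ 0) ∧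
      (∀ s ∈ S, Tendsto
        (fun n => eLpNorm (fun x => f n (s⁻¹ • x) - f n x) (ENNReal.ofReal p) ν
          / eLpNorm (f n) (ENNReal.ofReal p) ν) atTop (nhds 0)) :=
  not_expanding_implies_almost_invariant_vectors_general ν hmp S hS1 p hp hnotexp
end

section
/- Let Γ = ⟨S⟩ act on a probability space (X,ν) preserving the measure, with S finite symmetric containing 1, and suppose the action is ε-expanding in measure. Let g ≥ 0 be a nonnegative simple function g = Σ_{i=0}^n β_i 1_{B_i} with β_i > 0, nested sets B_{i+1} ⊆ B_i, and ν(B_i) ≤ 1/2 for all i. Then for 1 ≤ p < ∞ there exists s ∈ S with ‖s·g − g‖_p ≥ ((1 + ε/|S|)^{1/p} − 1)‖g‖_p. -/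
/-!
For `p`-th powers, the layer-cake formula writes `‖g‖_p^p` as an integral of the measures of the
superlevel sets `{g > t}`. The function `max g (s·g)` has superlevel sets `{g > t} ∪ s·{g > t}`,
and `ε`-expansion of each `{g > t}` (all contained in `B 0`, so of measure `≤ 1/2`) gives
`∑_{s ∈ S} ν({g > t} ∪ s·{g > t}) ≥ (|S| + ε) ν{g > t}`. Integrating over `t` and choosing the
best `s` gives `‖max g (s·g)‖_p ≥ (1 + ε/|S|)^{1/p} ‖g‖_p`, and the triangle inequality with
`0 ≤ max g (s·g) - g ≤ |s·g - g|` concludes.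
-/

open MeasureTheory Pointwise
open scoped ENNReal

section

variable {Γ X : Type*} [Group Γ] [MulAction Γ X]

theorem setOf_lt_max_inv_smul (f : X → ℝ) (t : ℝ) (s : Γ) :
    {x | t < max (f x) (f (s⁻¹ • x))} = {x | t < f x} ∪ s • {x | t < f x} := by
  ext x
  simp [Set.mem_smul_set_iff_inv_smul_mem]

theorem setOf_lt_sum_mul_indicator_subset {ι : Type*} (I : Finset ι) (β : ι → ℝ)
    {B : ι → Set X} {C : Set X} (hBC : ∀ i ∈ I, B i ⊆ C) {t : ℝ} (ht : 0 ≤ t) :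
    {x | t < ∑ i ∈ I, β i * (B i).indicator (fun _ => (1 : ℝ)) x} ⊆ C := by
  intro x (hx : t < _)
  by_contra hxC
  have hzero : ∀ i ∈ I, β i * (B i).indicator (fun _ => (1 : ℝ)) x = 0 := fun i hi => by
    rw [Set.indicator_of_notMem fun hxB => hxC (hBC i hi hxB), mul_zero]
  rw [Finset.sum_eq_zero hzero] at hx
  exact ht.not_gt hx

variable [MeasurableSpace X] {ν : Measure X}

theorem measure_biUnion_smul_add_card_mul_le (S : Finset Γ) {A : Set X}
    (hA : NullMeasurableSet A ν) :
    ν (⋃ s ∈ S, s • A) + S.card * ν A ≤ ν A + ∑ s ∈ S, ν (A ∪ s • A) := by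
  have hunion : ν (⋃ s ∈ S, s • A) ≤ ν A + ∑ s ∈ S, ν (s • A \ A) :=
    calc ν (⋃ s ∈ S, s • A) ≤ ν (A ∪ ⋃ s ∈ S, s • A \ A) :=
          measure_mono fun x hx => by
            by_cases hxA : x ∈ A
            · exact Or.inl hxA
            · obtain ⟨s, hs, hx⟩ := Set.mem_iUnion₂.mp hx
              exact Or.inr (Set.mem_iUnion₂.mpr ⟨s, hs, hx, hxA⟩)
      _ ≤ ν A + ν (⋃ s ∈ S, s • A \ A) := measure_union_le _ _
      _ ≤ ν A + ∑ s ∈ S, ν (s • A \ A) := by gcongr; exact measure_biUnion_finset_le S _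
  calc ν (⋃ s ∈ S, s • A) + S.card * ν A
      ≤ ν A + (∑ s ∈ S, ν (s • A \ A) + S.card * ν A) := by
        rw [← add_assoc]; gcongr
    _ = ν A + ∑ s ∈ S, ν (A ∪ s • A) := by
        rw [← nsmul_eq_mul, ← Finset.sum_const, ← Finset.sum_add_distrib]
        simp_rw [add_comm _ (ν A), measure_add_sdiff hA]

theorem card_add_mul_measure_le_sum_measure_union_smul (S : Finset Γ) {ε : ℝ} (hε : 0 ≤ ε)
    {A : Set X} (hA : NullMeasurableSet A ν) (hA_fin : ν A ≠ ∞)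
    (hexp : ENNReal.ofReal (1 + ε) * ν A ≤ ν (⋃ s ∈ S, s • A)) :
    (S.card + ENNReal.ofReal ε) * ν A ≤ ∑ s ∈ S, ν (A ∪ s • A) := by
  rw [← ENNReal.add_le_add_iff_left hA_fin]
  calc ν A + (S.card + ENNReal.ofReal ε) * ν A
      = ENNReal.ofReal (1 + ε) * ν A + S.card * ν A := by
        rw [ENNReal.ofReal_add zero_le_one hε, ENNReal.ofReal_one]; ring
    _ ≤ ν (⋃ s ∈ S, s • A) + S.card * ν A := by gcongr
    _ ≤ ν A + ∑ s ∈ S, ν (A ∪ s • A) := measure_biUnion_smul_add_card_mul_le S hA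

theorem eLpNorm_ofReal_eq_lintegral_rpow_of_nonneg {f : X → ℝ} (hf : 0 ≤ f) {p : ℝ}
    (hp : 0 < p) :
    eLpNorm f (ENNReal.ofReal p) ν = (∫⁻ x, ENNReal.ofReal (f x ^ p) ∂ν) ^ (1 / p) := by
  rw [eLpNorm_eq_lintegral_rpow_enorm_toReal (by simpa using hp) ENNReal.ofReal_ne_top,
    ENNReal.toReal_ofReal hp.le]
  simp_rw [Real.enorm_of_nonneg (hf _), ENNReal.ofReal_rpow_of_nonneg (hf _) hp.le]

theorem ofReal_sub_one_mul_eLpNorm_le_eLpNorm_sub {q : ℝ≥0∞} (hq : 1 ≤ q) {f g : X → ℝ}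
    (hf : AEStronglyMeasurable f ν) (hg : AEStronglyMeasurable g ν) (hg_fin : eLpNorm g q ν ≠ ∞)
    {κ : ℝ} (h : ENNReal.ofReal κ * eLpNorm g q ν ≤ eLpNorm (fun x => max (g x) (f x)) q ν) :
    ENNReal.ofReal (κ - 1) * eLpNorm g q ν ≤ eLpNorm (fun x => f x - g x) q ν := by
  have hmax : eLpNorm (fun x => max (g x) (f x)) q ν
      ≤ eLpNorm (fun x => f x - g x) q ν + eLpNorm g q ν :=
    calc eLpNorm (fun x => max (g x) (f x)) q ν
        = eLpNorm ((fun x => max (g x) (f x) - g x) + g) q ν := by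
          congr 1; funext x; simp
      _ ≤ eLpNorm (fun x => max (g x) (f x) - g x) q ν + eLpNorm g q ν :=
        eLpNorm_add_le ((hg.sup hf).sub hg) hg hq
      _ ≤ eLpNorm (fun x => f x - g x) q ν + eLpNorm g q ν := by
        gcongr 1
        refine eLpNorm_mono fun x => ?_
        simpa only [Real.norm_eq_abs, max_comm (g x), max_self]
          using abs_max_sub_max_le_abs (f x) (g x) (g x)
  rw [ENNReal.ofReal_sub _ zero_le_one, ENNReal.ofReal_one, ENNReal.sub_mul fun _ _ => hg_fin,
    one_mul, tsub_le_iff_right]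
  exact h.trans hmax

variable [MeasurableConstSMul Γ X]

theorem mul_lintegral_rpow_le_sum_lintegral_rpow_max_inv_smul {S : Finset Γ} {c : ℝ≥0∞}
    {f : X → ℝ} (hf : 0 ≤ f) (hfm : Measurable f) {p : ℝ} (hp : 0 < p)
    (hlevel : ∀ t > 0,
      c * ν {x | t < f x} ≤ ∑ s ∈ S, ν ({x | t < f x} ∪ s • {x | t < f x})) :
    c * ∫⁻ x, ENNReal.ofReal (f x ^ p) ∂ν
      ≤ ∑ s ∈ S, ∫⁻ x, ENNReal.ofReal (max (f x) (f (s⁻¹ • x)) ^ p) ∂ν := by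
  have hmax_nn : ∀ s : Γ, 0 ≤ fun x => max (f x) (f (s⁻¹ • x)) :=
    fun s x => (hf x).trans (le_max_left _ _)
  have hmax_meas : ∀ s : Γ, Measurable fun x => max (f x) (f (s⁻¹ • x)) :=
    fun s => hfm.max (hfm.comp (measurable_const_smul s⁻¹))
  have htail_meas : ∀ g : X → ℝ,
      Measurable fun t : ℝ => ν {x | t < g x} * ENNReal.ofReal (t ^ (p - 1)) := fun g =>
    Measurable.mul (f := fun t : ℝ => ν {x | t < g x})
      (Antitone.measurable fun _ _ ht => measure_mono fun _ hx => lt_of_le_of_lt ht hx)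
      (measurable_id.pow_const _).ennreal_ofReal
  simp_rw [lintegral_rpow_eq_lintegral_meas_lt_mul ν (.of_forall hf) hfm.aemeasurable hp,
    lintegral_rpow_eq_lintegral_meas_lt_mul ν (.of_forall (hmax_nn _))
      (hmax_meas _).aemeasurable hp, ← Finset.mul_sum, mul_left_comm c]
  gcongr
  rw [← lintegral_finsetSum _ fun s _ => htail_meas _]
  simp_rw [setOf_lt_max_inv_smul]
  refine (lintegral_const_mul_le _ _).trans (setLIntegral_mono' measurableSet_Ioi fun t ht => ?_)
  simp only [← Finset.sum_mul, ← mul_assoc]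
  gcongr
  exact hlevel t ht

theorem exists_mem_ofReal_rpow_mul_eLpNorm_le_eLpNorm_max_inv_smul {S : Finset Γ}
    (hS : S.Nonempty) {ε : ℝ} (hε : 0 ≤ ε) {f : X → ℝ} (hf : 0 ≤ f) (hfm : Measurable f)
    {p : ℝ} (hp : 0 < p)
    (hlevel : ∀ t > 0, (S.card + ENNReal.ofReal ε) * ν {x | t < f x}
      ≤ ∑ s ∈ S, ν ({x | t < f x} ∪ s • {x | t < f x})) :
    ∃ s ∈ S, ENNReal.ofReal ((1 + ε / S.card) ^ (1 / p)) * eLpNorm f (ENNReal.ofReal p) ν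
      ≤ eLpNorm (fun x => max (f x) (f (s⁻¹ • x))) (ENNReal.ofReal p) ν := by
  have hcard : (0 : ℝ) < S.card := by exact_mod_cast hS.card_pos
  have hκ : (S.card : ℝ≥0∞) * ENNReal.ofReal (1 + ε / S.card) = S.card + ENNReal.ofReal ε := by
    rw [← ENNReal.ofReal_natCast, ← ENNReal.ofReal_mul hcard.le, mul_add, mul_one,
      mul_div_cancel₀ _ hcard.ne', ENNReal.ofReal_add hcard.le hε]
  obtain ⟨s, hs, hgap⟩ := ENNReal.exists_le_of_sum_le hS
    (f := fun _ => ENNReal.ofReal (1 + ε / S.card) * ∫⁻ x, ENNReal.ofReal (f x ^ p) ∂ν)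
    (g := fun s => ∫⁻ x, ENNReal.ofReal (max (f x) (f (s⁻¹ • x)) ^ p) ∂ν) <| by
      rw [Finset.sum_const, nsmul_eq_mul, ← mul_assoc, hκ]
      exact mul_lintegral_rpow_le_sum_lintegral_rpow_max_inv_smul hf hfm hp hlevel
  refine ⟨s, hs, ?_⟩
  rw [eLpNorm_ofReal_eq_lintegral_rpow_of_nonneg hf hp,
    eLpNorm_ofReal_eq_lintegral_rpow_of_nonneg (fun x => (hf x).trans (le_max_left _ _)) hp,
    ← ENNReal.ofReal_rpow_of_pos (by positivity), ← ENNReal.mul_rpow_of_nonneg _ _ (by positivity)]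
  exact ENNReal.rpow_le_rpow hgap (by positivity)

end

theorem expanding_gives_gap_on_simple_functions_general
    {Γ X : Type*} [Group Γ] [MulAction Γ X] [MeasurableSpace X]
    (ν : Measure X)
    (hmp : ∀ g : Γ, MeasurePreserving (fun x => g • x) ν ν)
    (S : Finset Γ) (hS1 : (1 : Γ) ∈ S)
    (ε : ℝ) (hε : 0 < ε)
    (hexp : ∀ A : Set X, MeasurableSet A → ν A ≤ 1 / 2 →
      ENNReal.ofReal (1 + ε) * ν A ≤ ν (⋃ s ∈ S, s • A))
    (p : ℝ) (hp : 1 ≤ p)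
    (n : ℕ) (β : Fin (n + 1) → ℝ) (hβ : ∀ i, 0 < β i)
    (B : Fin (n + 1) → Set X) (hBmeas : ∀ i, MeasurableSet (B i))
    (hBnested : ∀ i j : Fin (n + 1), i ≤ j → B j ⊆ B i)
    (hBhalf : ∀ i, ν (B i) ≤ 1 / 2)
    (g : X → ℝ)
    (hg : g = fun x => ∑ i, β i * (B i).indicator (fun _ => (1 : ℝ)) x) :
    ∃ s ∈ S,
      ENNReal.ofReal ((1 + ε / S.card) ^ (1 / p) - 1)
          * eLpNorm g (ENNReal.ofReal p) ν
        ≤ eLpNorm (fun x => g (s⁻¹ • x) - g x) (ENNReal.ofReal p) ν := by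
  have : MeasurableConstSMul Γ X := ⟨fun γ => (hmp γ).measurable⟩
  have hB_fin : ∀ i, ν (B i) ≠ ∞ := fun i => ((hBhalf i).trans_lt (by norm_num)).ne
  have hg_nn : 0 ≤ g := hg ▸ fun x => Finset.sum_nonneg fun i _ =>
    mul_nonneg (hβ i).le (Set.indicator_nonneg (fun _ _ => zero_le_one) x)
  have hg_meas : Measurable g := hg ▸ Finset.measurable_sum _ fun i _ =>
    (measurable_const.indicator (hBmeas i)).const_mul (β i)
  have hg_Lp : MemLp g (ENNReal.ofReal p) ν := hg ▸ memLp_finsetSum _ fun i _ =>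
    (memLp_indicator_const _ (hBmeas i) (1 : ℝ) (.inr (hB_fin i))).const_mul (β i)
  have hlevel : ∀ t > 0, (S.card + ENNReal.ofReal ε) * ν {x | t < g x}
      ≤ ∑ s ∈ S, ν ({x | t < g x} ∪ s • {x | t < g x}) := fun t ht => by
    have hsub : {x | t < g x} ⊆ B 0 := hg ▸ setOf_lt_sum_mul_indicator_subset _ β
      (fun i _ => hBnested 0 i (Fin.zero_le i)) ht.le
    have hmeas : MeasurableSet {x | t < g x} := measurableSet_lt measurable_const hg_meas
    have hhalf : ν {x | t < g x} ≤ 1 / 2 := (measure_mono hsub).trans (hBhalf 0)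
    exact card_add_mul_measure_le_sum_measure_union_smul S hε.le hmeas.nullMeasurableSet
      (hhalf.trans_lt (by norm_num)).ne (hexp _ hmeas hhalf)
  obtain ⟨s, hs, hgap⟩ := exists_mem_ofReal_rpow_mul_eLpNorm_le_eLpNorm_max_inv_smul
    ⟨1, hS1⟩ hε.le hg_nn hg_meas (by linarith) hlevel
  exact ⟨s, hs, ofReal_sub_one_mul_eLpNorm_le_eLpNorm_sub (ENNReal.one_le_ofReal.mpr hp)
    (hg_meas.comp (measurable_const_smul s⁻¹)).aestronglyMeasurable
    hg_meas.aestronglyMeasurable hg_Lp.eLpNorm_ne_top hgap⟩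

/-- If the action of `Γ = ⟨S⟩` on a probability space is `ε`-expanding in measure and
`g = Σ β_i 1_{B_i}` is a nonnegative simple function with `β_i > 0`, nested sets
`B_{i+1} ⊆ B_i` and `ν(B_i) ≤ 1/2`, then there exists `s ∈ S` with
`‖s·g − g‖_p ≥ ((1 + ε/|S|)^{1/p} − 1)‖g‖_p`. -/
theorem expanding_gives_gap_on_simple_functions
    {Γ X : Type*} [Group Γ] [MulAction Γ X] [MeasurableSpace X]
    (ν : Measure X) [IsProbabilityMeasure ν]
    (hmp : ∀ g : Γ, MeasurePreserving (fun x => g • x) ν ν)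
    (S : Finset Γ) (hS1 : (1 : Γ) ∈ S) (hSsymm : ∀ s ∈ S, s⁻¹ ∈ S)
    (ε : ℝ) (hε : 0 < ε)
    (hexp : ∀ A : Set X, MeasurableSet A → ν A ≤ 1 / 2 →
      ENNReal.ofReal (1 + ε) * ν A ≤ ν (⋃ s ∈ S, s • A))
    (p : ℝ) (hp : 1 ≤ p)
    (n : ℕ) (β : Fin (n + 1) → ℝ) (hβ : ∀ i, 0 < β i)
    (B : Fin (n + 1) → Set X) (hBmeas : ∀ i, MeasurableSet (B i))
    (hBnested : ∀ i j : Fin (n + 1), i ≤ j → B j ⊆ B i)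
    (hBhalf : ∀ i, ν (B i) ≤ 1 / 2)
    (g : X → ℝ)
    (hg : g = fun x => ∑ i, β i * (B i).indicator (fun _ => (1 : ℝ)) x) :
    ∃ s ∈ S,
      ENNReal.ofReal ((1 + ε / S.card) ^ (1 / p) - 1)
          * eLpNorm g (ENNReal.ofReal p) ν
        ≤ eLpNorm (fun x => g (s⁻¹ • x) - g x) (ENNReal.ofReal p) ν :=
  expanding_gives_gap_on_simple_functions_general ν hmp S hS1 ε hε hexp p hp n β hβ B hBmeas
    hBnested hBhalf g hg
end

section
/- Let G be a group with a measure-preserving action ρ on a probability space (X,ν), S ⊆ G a finite symmetric subset containing the identity, and Γ = ⟨S⟩ the subgroup generated by S. Then the restriction ρ|_Γ is expanding in measure if and only if there exists ε > 0 such that (S, ε) is a Kazhdan pair for the unitary representation π_ρ : G ↷ L²_0(X). -/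
/-!
Expansion gives a spectral gap. For `f ∈ L²_0` let `m` be a median of `f` and split `F = f - m`
into its positive and negative parts. Each of `φ = (F⁺)²`, `φ = (F⁻)²` is supported on a set of
measure `≤ 1/2`, so expansion applies to every superlevel set `{φ > t}`, `t > 0`; integrating in `t`
(layer cake and Fubini) gives `α ‖φ‖₁ ≤ ∑ₛ ‖(s·φ - φ)⁺‖₁`. Pointwise the two integrands add up
to at most `|s·F - F| (|s·F| + |F|)`, so by Cauchy–Schwarz the two right-hand sides add up to at
most `∑ₛ ‖s·f - f‖₂ · 2‖F‖₂`; and `‖f‖₂ ≤ ‖F‖₂` since `f` has mean zero.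
Hence `α ‖f‖₂ ≤ 2 ∑ₛ ‖s·f - f‖₂`.

Conversely, a set `A` with `ν(S·A) < (1 + α) ν(A)` gives the almost invariant vector
`1_A - ν(A)`: `‖s·1_A - 1_A‖₂² = ν(sA ∆ A) ≤ 2α ν(A)` while `‖1_A - ν(A)‖₂² ≥ ν(A)/4`.
-/

open MeasureTheory Pointwise Filter Set
open scoped ENNReal symmDiff

theorem exists_median (μ : Measure ℝ) [IsProbabilityMeasure μ] :
    ∃ m, μ (Ioi m) ≤ 1 / 2 ∧ μ (Iio m) ≤ 1 / 2 := by
  set F := ProbabilityTheory.cdf μ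
  set T := {t | 1 / 2 ≤ F t}
  have hne : T.Nonempty :=
    (((ProbabilityTheory.tendsto_cdf_atTop μ).eventually
      (lt_mem_nhds (by norm_num : (1 / 2 : ℝ) < 1))).exists).imp fun _ h => h.le
  have hbdd : BddBelow T := by
    obtain ⟨b, hb⟩ := eventually_atBot.mp ((ProbabilityTheory.tendsto_cdf_atBot μ).eventually
      (gt_mem_nhds (by norm_num : (0 : ℝ) < 1 / 2)))
    exact ⟨b, fun t ht => not_lt.mp fun htb => (hb t htb.le).not_ge ht⟩
  refine ⟨sInf T, ?_, ?_⟩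
  · have hright : ∀ t > sInf T, 1 / 2 ≤ F t := fun t ht => by
      obtain ⟨t', ht'T, ht't⟩ := (csInf_lt_iff hbdd hne).mp ht
      exact ht'T.trans (F.mono ht't.le)
    have hm : 1 / 2 ≤ F (sInf T) :=
      ge_of_tendsto ((F.right_continuous _).mono Ioi_subset_Ici_self)
        (eventually_nhdsWithin_of_forall hright)
    rw [← ProbabilityTheory.measure_cdf μ, F.measure_Ioi (ProbabilityTheory.tendsto_cdf_atTop μ)]
    calc ENNReal.ofReal (1 - F (sInf T)) ≤ ENNReal.ofReal (1 / 2) := by gcongr; linarith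
      _ = 1 / 2 := by rw [ENNReal.ofReal_div_of_pos two_pos]; simp
  · have hleft : ∀ t < sInf T, F t ≤ 1 / 2 := fun t ht =>
      (not_le.mp fun htT => ht.not_ge (csInf_le hbdd htT)).le
    have hm : Function.leftLim F (sInf T) ≤ 1 / 2 :=
      le_of_tendsto (F.mono.tendsto_leftLim _) (eventually_nhdsWithin_of_forall hleft)
    rw [← ProbabilityTheory.measure_cdf μ, F.measure_Iio (ProbabilityTheory.tendsto_cdf_atBot μ),
      sub_zero]
    calc ENNReal.ofReal (Function.leftLim F (sInf T)) ≤ ENNReal.ofReal (1 / 2) := by gcongr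
      _ = 1 / 2 := by rw [ENNReal.ofReal_div_of_pos two_pos]; simp

section
variable {X : Type*} [MeasurableSpace X] {ν : Measure X}

theorem eLpNorm_two_sq (g : X → ℝ) : eLpNorm g 2 ν ^ 2 = ∫⁻ x, ‖g x‖ₑ ^ 2 ∂ν := by
  simpa using eLpNorm_nnreal_pow_eq_lintegral (f := g) (μ := ν) (p := 2) two_ne_zero

theorem eLpNorm_le_eLpNorm_sub_const [IsProbabilityMeasure ν] {f : X → ℝ} (hf : MemLp f 2 ν)
    (hf0 : ∫ x, f x ∂ν = 0) (c : ℝ) : eLpNorm f 2 ν ≤ eLpNorm (fun x => f x - c) 2 ν := by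
  have hfc : MemLp (fun x => f x - c) 2 ν := hf.sub (memLp_const c)
  refine (ENNReal.pow_le_pow_left_iff two_ne_zero).mp ?_
  rw [eLpNorm_two_sq, eLpNorm_two_sq]
  calc ∫⁻ x, ‖f x‖ₑ ^ 2 ∂ν = ProbabilityTheory.evariance f ν := by
        rw [ProbabilityTheory.evariance_def' hf.1, hf0]; simp
    _ = ProbabilityTheory.evariance (fun x => f x - c) ν := by
        rw [← hf.ofReal_variance_eq, ← hfc.ofReal_variance_eq,
          ProbabilityTheory.variance_sub_const hf.1]
    _ ≤ ∫⁻ x, ‖f x - c‖ₑ ^ 2 ∂ν := by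
        rw [ProbabilityTheory.evariance_def' hfc.1]; exact tsub_le_self

theorem lintegral_enorm_mul_le_eLpNorm_mul_eLpNorm {u v : X → ℝ} (hu : AEMeasurable u ν)
    (hv : AEMeasurable v ν) : ∫⁻ x, ‖u x‖ₑ * ‖v x‖ₑ ∂ν ≤ eLpNorm u 2 ν * eLpNorm v 2 ν := by
  simpa [eLpNorm_eq_lintegral_rpow_enorm_toReal two_ne_zero ENNReal.ofNat_ne_top] using
    ENNReal.lintegral_mul_le_Lp_mul_Lq ν Real.HolderConjugate.two_two hu.enorm hv.enorm

theorem measurableSet_setOf_le_fst_and_fst_lt {φ ψ : X → ℝ} (hφ : Measurable φ)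
    (hψ : Measurable ψ) :
    MeasurableSet {p : ℝ × X | φ p.2 ≤ p.1 ∧ p.1 < ψ p.2} :=
  (measurableSet_le (hφ.comp measurable_snd) measurable_fst).inter
    (measurableSet_lt measurable_fst (hψ.comp measurable_snd))

theorem lintegral_measure_setOf_le_lt [SFinite ν] {φ ψ : X → ℝ} (hφ : Measurable φ)
    (hψ : Measurable ψ) :
    ∫⁻ t, ν {x | φ x ≤ t ∧ t < ψ x} = ∫⁻ x, ENNReal.ofReal (ψ x - φ x) ∂ν := by
  have hE := measurableSet_setOf_le_fst_and_fst_lt hφ hψ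
  calc ∫⁻ t, ν {x | φ x ≤ t ∧ t < ψ x}
      = (volume.prod ν) {p : ℝ × X | φ p.2 ≤ p.1 ∧ p.1 < ψ p.2} := (Measure.prod_apply hE).symm
    _ = ∫⁻ x, volume (Ico (φ x) (ψ x)) ∂ν := Measure.prod_apply_symm hE
    _ = ∫⁻ x, ENNReal.ofReal (ψ x - φ x) ∂ν := by simp only [Real.volume_Ico]

theorem eLpNorm_indicator_const_sq {A : Set X} (hA : MeasurableSet A) (c : ℝ) :
    eLpNorm (A.indicator fun _ => c) 2 ν ^ 2 = ‖c‖ₑ ^ 2 * ν A := by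
  rw [eLpNorm_indicator_const hA two_ne_zero ENNReal.ofNat_ne_top, mul_pow,
    ← ENNReal.rpow_natCast (ν A ^ _), ← ENNReal.rpow_mul]
  norm_num

theorem ofReal_sq_posPart_add_ofReal_sq_negPart (a : ℝ) :
    ENNReal.ofReal (a⁺ ^ 2) + ENNReal.ofReal (a⁻ ^ 2) = ‖a‖ₑ ^ 2 := by
  rw [Real.enorm_eq_ofReal_abs, ← ENNReal.ofReal_pow (abs_nonneg a), sq_abs]
  rcases le_total 0 a with ha | ha <;> simp [ha]

theorem ofReal_sq_posPart_sub_add_ofReal_sq_negPart_sub_le (a b : ℝ) :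
    ENNReal.ofReal (a⁺ ^ 2 - b⁺ ^ 2) + ENNReal.ofReal (a⁻ ^ 2 - b⁻ ^ 2)
      ≤ ‖a - b‖ₑ * ‖|a| + |b|‖ₑ := by
  rw [Real.enorm_eq_ofReal_abs, Real.enorm_eq_ofReal_abs, ← ENNReal.ofReal_mul (abs_nonneg _),
    abs_of_nonneg (add_nonneg (abs_nonneg a) (abs_nonneg b))]
  rcases le_total 0 a with ha | ha <;> rcases le_total 0 b with hb | hb <;>
  simp only [posPart_of_nonneg, posPart_of_nonpos, negPart_of_nonneg, negPart_of_nonpos,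
    abs_of_nonneg, abs_of_nonpos, ha, hb]
  all_goals
    first
    | rw [ENNReal.ofReal_of_nonpos (p := (0:ℝ) ^ 2 - _) (by nlinarith), add_zero]
    | rw [ENNReal.ofReal_of_nonpos (p := (0:ℝ) ^ 2 - _) (by nlinarith), zero_add]
  all_goals
    exact ENNReal.ofReal_le_ofReal (by nlinarith [le_abs_self (a - b), neg_abs_le (a - b)])

theorem MeasureTheory.MeasurePreserving.lintegral_sq_posPart_sub_add_sq_negPart_sub_le {T : X → X}
    (hT : MeasurePreserving T ν ν) {F : X → ℝ} (hF : Measurable F) :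
    ∫⁻ x, ENNReal.ofReal ((F (T x))⁺ ^ 2 - (F x)⁺ ^ 2) ∂ν
        + ∫⁻ x, ENNReal.ofReal ((F (T x))⁻ ^ 2 - (F x)⁻ ^ 2) ∂ν
      ≤ eLpNorm (fun x => F (T x) - F x) 2 ν * (2 * eLpNorm F 2 ν) := by
  have hTm := hT.measurable
  have habs : eLpNorm (fun x => |F (T x)|) 2 ν = eLpNorm F 2 ν :=
    (eLpNorm_congr_norm_ae (ae_of_all _ fun x => by simp)).trans
      (eLpNorm_comp_measurePreserving hF.aestronglyMeasurable hT)
  rw [← lintegral_add_left (by fun_prop)]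
  calc _ ≤ ∫⁻ x, ‖F (T x) - F x‖ₑ * ‖|F (T x)| + |F x|‖ₑ ∂ν :=
        lintegral_mono fun x => ofReal_sq_posPart_sub_add_ofReal_sq_negPart_sub_le _ _
    _ ≤ eLpNorm (fun x => F (T x) - F x) 2 ν * eLpNorm (fun x => |F (T x)| + |F x|) 2 ν :=
        lintegral_enorm_mul_le_eLpNorm_mul_eLpNorm (by fun_prop) (by fun_prop)
    _ ≤ eLpNorm (fun x => F (T x) - F x) 2 ν
          * (eLpNorm (fun x => |F (T x)|) 2 ν + eLpNorm (fun x => |F x|) 2 ν) := by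
        gcongr
        exact eLpNorm_add_le (continuous_abs.measurable.comp (hF.comp hTm)).aestronglyMeasurable
          (continuous_abs.measurable.comp hF).aestronglyMeasurable one_le_two
    _ = eLpNorm (fun x => F (T x) - F x) 2 ν * (2 * eLpNorm F 2 ν) := by
        rw [habs, two_mul, eLpNorm_congr_norm_ae (f := fun x => |F x|) (g := F)
          (ae_of_all _ fun x => by simp)]

end

section
variable {G X : Type*} [Group G] [MulAction G X] [MeasurableSpace X]

def IsExpandingInMeasure (ν : Measure X) (S : Finset G) (α : ℝ) : Prop :=
  ∀ A : Set X, MeasurableSet A → ν A ≤ 1 / 2 → ENNReal.ofReal (1 + α) * ν A ≤ ν (⋃ s ∈ S, s • A)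

def IsKazhdanPair (ν : Measure X) (S : Finset G) (ε : ℝ) : Prop :=
  ¬ ∃ f : X → ℝ, MemLp f 2 ν ∧ (∫ x, f x ∂ν = 0) ∧ eLpNorm f 2 ν ≠ 0 ∧
    ∀ s ∈ S, eLpNorm (fun x => f (s⁻¹ • x) - f x) 2 ν ≤ ENNReal.ofReal ε * eLpNorm f 2 ν

variable {ν : Measure X} {S : Finset G} {α : ℝ}

theorem IsExpandingInMeasure.mul_lintegral_le_sum [IsFiniteMeasure ν] [MeasurableConstSMul G X]
    (hexp : IsExpandingInMeasure ν S α) (hα : 0 ≤ α) {φ : X → ℝ} (hφ : Measurable φ)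
    (hφ0 : 0 ≤ φ) (hsupp : ν {x | 0 < φ x} ≤ 1 / 2) :
    ENNReal.ofReal α * ∫⁻ x, ENNReal.ofReal (φ x) ∂ν
      ≤ ∑ s ∈ S, ∫⁻ x, ENNReal.ofReal (φ (s⁻¹ • x) - φ x) ∂ν := by
  set A : ℝ → Set X := fun t => {x | t < φ x}
  have hdiff (s : G) (t : ℝ) : s • A t \ A t = {x | φ x ≤ t ∧ t < φ (s⁻¹ • x)} := by
    ext x; simp [A, mem_smul_set_iff_inv_smul_mem, and_comm]
  have hpt (t : ℝ) (ht : 0 < t) :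
      ENNReal.ofReal α * ν (A t) ≤ ∑ s ∈ S, ν {x | φ x ≤ t ∧ t < φ (s⁻¹ • x)} := by
    have hexpA := hexp (A t) (measurableSet_lt measurable_const hφ)
      ((measure_mono fun x hx => ht.trans hx).trans hsupp)
    rw [ENNReal.ofReal_add zero_le_one hα, ENNReal.ofReal_one, add_mul, one_mul] at hexpA
    refine (ENNReal.add_le_add_iff_left (measure_ne_top ν (A t))).mp (hexpA.trans ?_)
    simp_rw [← hdiff]
    calc ν (⋃ s ∈ S, s • A t) ≤ ν (A t ∪ ⋃ s ∈ S, (s • A t \ A t)) :=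
          measure_mono fun x hx => by
            by_cases h : x ∈ A t
            · exact Or.inl h
            · obtain ⟨s, hs, hxs⟩ := mem_iUnion₂.mp hx
              exact Or.inr (mem_biUnion hs ⟨hxs, h⟩)
      _ ≤ ν (A t) + ∑ s ∈ S, ν (s • A t \ A t) :=
          (measure_union_le _ _).trans (add_le_add_right (measure_biUnion_finset_le _ _) _)
  have hmeas (s : G) : Measurable fun t => ν {x | φ x ≤ t ∧ t < φ (s⁻¹ • x)} :=
    measurable_measure_prodMk_left
      (measurableSet_setOf_le_fst_and_fst_lt hφ (hφ.comp (measurable_const_smul s⁻¹)))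
  calc ENNReal.ofReal α * ∫⁻ x, ENNReal.ofReal (φ x) ∂ν
      = ∫⁻ t in Ioi 0, ENNReal.ofReal α * ν (A t) := by
        rw [lintegral_eq_lintegral_meas_lt ν (ae_of_all _ hφ0) hφ.aemeasurable,
          lintegral_const_mul' _ _ ENNReal.ofReal_ne_top]
    _ ≤ ∫⁻ t in Ioi 0, ∑ s ∈ S, ν {x | φ x ≤ t ∧ t < φ (s⁻¹ • x)} :=
        setLIntegral_mono' measurableSet_Ioi hpt
    _ ≤ ∑ s ∈ S, ∫⁻ t, ν {x | φ x ≤ t ∧ t < φ (s⁻¹ • x)} := by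
        rw [lintegral_finsetSum _ fun s _ => hmeas s]
        exact Finset.sum_le_sum fun s _ => setLIntegral_le_lintegral _ _
    _ = ∑ s ∈ S, ∫⁻ x, ENNReal.ofReal (φ (s⁻¹ • x) - φ x) ∂ν :=
        Finset.sum_congr rfl fun s _ =>
          lintegral_measure_setOf_le_lt hφ (hφ.comp (measurable_const_smul s⁻¹))

theorem IsExpandingInMeasure.mul_eLpNorm_le_sum_of_measurable [IsProbabilityMeasure ν]
    [MeasurableConstSMul G X] [SMulInvariantMeasure G X ν]
    (hexp : IsExpandingInMeasure ν S α) (hα : 0 ≤ α) {f : X → ℝ} (hfm : Measurable f)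
    (hf : MemLp f 2 ν) (hf0 : ∫ x, f x ∂ν = 0) :
    ENNReal.ofReal α * eLpNorm f 2 ν
      ≤ 2 * ∑ s ∈ S, eLpNorm (fun x => f (s⁻¹ • x) - f x) 2 ν := by
  have := Measure.isProbabilityMeasure_map (μ := ν) hfm.aemeasurable
  obtain ⟨m, hmIoi, hmIio⟩ := exists_median (ν.map f)
  rw [Measure.map_apply hfm measurableSet_Ioi] at hmIoi
  rw [Measure.map_apply hfm measurableSet_Iio] at hmIio
  set F : X → ℝ := fun x => f x - m
  have hFm : Measurable F := hfm.sub_const m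
  set N := eLpNorm F 2 ν
  have hpos := hexp.mul_lintegral_le_sum hα (φ := fun x => (F x)⁺ ^ 2) (by fun_prop)
    (fun x => sq_nonneg _) (by convert hmIoi using 2; ext x; simp [F, sq_pos_iff])
  have hneg := hexp.mul_lintegral_le_sum hα (φ := fun x => (F x)⁻ ^ 2) (by fun_prop)
    (fun x => sq_nonneg _) (by convert hmIio using 2; ext x; simp [F, sq_pos_iff])
  have hsplit : ∫⁻ x, ENNReal.ofReal ((F x)⁺ ^ 2) ∂ν + ∫⁻ x, ENNReal.ofReal ((F x)⁻ ^ 2) ∂ν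
      = N ^ 2 := by
    rw [← lintegral_add_left (by fun_prop), eLpNorm_two_sq]
    exact lintegral_congr fun x => ofReal_sq_posPart_add_ofReal_sq_negPart (F x)
  have key : ENNReal.ofReal α * N * N
      ≤ (2 * ∑ s ∈ S, eLpNorm (fun x => f (s⁻¹ • x) - f x) 2 ν) * N := by
    calc ENNReal.ofReal α * N * N
        = ENNReal.ofReal α * ∫⁻ x, ENNReal.ofReal ((F x)⁺ ^ 2) ∂ν
          + ENNReal.ofReal α * ∫⁻ x, ENNReal.ofReal ((F x)⁻ ^ 2) ∂ν := by
          rw [← mul_add, hsplit, mul_assoc, sq]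
      _ ≤ ∑ s ∈ S, (∫⁻ x, ENNReal.ofReal ((F (s⁻¹ • x))⁺ ^ 2 - (F x)⁺ ^ 2) ∂ν
            + ∫⁻ x, ENNReal.ofReal ((F (s⁻¹ • x))⁻ ^ 2 - (F x)⁻ ^ 2) ∂ν) := by
          rw [Finset.sum_add_distrib]; exact add_le_add hpos hneg
      _ ≤ ∑ s ∈ S, eLpNorm (fun x => f (s⁻¹ • x) - f x) 2 ν * (2 * N) :=
          Finset.sum_le_sum fun s _ => by
            simpa only [F, sub_sub_sub_cancel_right] using
              (measurePreserving_smul s⁻¹ ν).lintegral_sq_posPart_sub_add_sq_negPart_sub_le hFm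
      _ = _ := by rw [← Finset.sum_mul]; ring
  have hfN : eLpNorm f 2 ν ≤ N := eLpNorm_le_eLpNorm_sub_const hf hf0 m
  rcases eq_or_ne N 0 with hN | hN
  · simp [nonpos_iff_eq_zero.mp (hN ▸ hfN)]
  · calc ENNReal.ofReal α * eLpNorm f 2 ν ≤ ENNReal.ofReal α * N := by gcongr
      _ ≤ _ := (ENNReal.mul_le_mul_iff_left hN (hf.sub (memLp_const m)).eLpNorm_ne_top).mp key

theorem IsExpandingInMeasure.mul_eLpNorm_le_sum [IsProbabilityMeasure ν] [MeasurableConstSMul G X]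
    [SMulInvariantMeasure G X ν] (hexp : IsExpandingInMeasure ν S α) (hα : 0 ≤ α) {f : X → ℝ}
    (hf : MemLp f 2 ν) (hf0 : ∫ x, f x ∂ν = 0) :
    ENNReal.ofReal α * eLpNorm f 2 ν
      ≤ 2 * ∑ s ∈ S, eLpNorm (fun x => f (s⁻¹ • x) - f x) 2 ν := by
  set g := hf.1.mk f
  have hfg : f =ᵐ[ν] g := hf.1.ae_eq_mk
  have hsub (s : G) : (fun x => f (s⁻¹ • x) - f x) =ᵐ[ν] fun x => g (s⁻¹ • x) - g x :=
    ((measurePreserving_smul s⁻¹ ν).quasiMeasurePreserving.ae_eq_comp hfg).sub hfg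
  rw [eLpNorm_congr_ae hfg, Finset.sum_congr rfl fun s _ => eLpNorm_congr_ae (hsub s)]
  exact hexp.mul_eLpNorm_le_sum_of_measurable hα hf.1.stronglyMeasurable_mk.measurable
    (hf.ae_eq hfg) (by rwa [← integral_congr_ae hfg])

theorem IsExpandingInMeasure.isKazhdanPair [IsProbabilityMeasure ν] [MeasurableConstSMul G X]
    [SMulInvariantMeasure G X ν] (hexp : IsExpandingInMeasure ν S α) (hα : 0 < α)
    (hS : S.Nonempty) : IsKazhdanPair ν S (α / (4 * S.card)) := by
  rintro ⟨f, hf, hf0, hfne, hbd⟩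
  have hcard : (0 : ℝ) < S.card := by exact_mod_cast hS.card_pos
  have hle : ENNReal.ofReal α * eLpNorm f 2 ν ≤ ENNReal.ofReal (α / 2) * eLpNorm f 2 ν :=
    calc ENNReal.ofReal α * eLpNorm f 2 ν
        ≤ 2 * ∑ s ∈ S, eLpNorm (fun x => f (s⁻¹ • x) - f x) 2 ν :=
          hexp.mul_eLpNorm_le_sum hα.le hf hf0
      _ ≤ 2 * ∑ _s ∈ S, ENNReal.ofReal (α / (4 * S.card)) * eLpNorm f 2 ν := by
          gcongr with s hs; exact hbd s hs
      _ = ENNReal.ofReal (α / 2) * eLpNorm f 2 ν := by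
          rw [Finset.sum_const, nsmul_eq_mul, ← mul_assoc, ← mul_assoc, ← ENNReal.ofReal_natCast,
            ← ENNReal.ofReal_ofNat 2, ← ENNReal.ofReal_mul (by norm_num),
            ← ENNReal.ofReal_mul (by positivity)]
          congr 2
          field_simp
          norm_num
  have := (ENNReal.mul_le_mul_iff_left hfne hf.eLpNorm_ne_top).mp hle
  rw [ENNReal.ofReal_le_ofReal_iff (by positivity)] at this
  linarith

theorem measure_smul_symmDiff_le_of_measure_iUnion_le [IsFiniteMeasure ν]
    [SMulInvariantMeasure G X ν] (hS1 : 1 ∈ S) (hSsymm : ∀ s ∈ S, s⁻¹ ∈ S) (hα : 0 ≤ α)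
    {A : Set X} (hA : MeasurableSet A)
    (hA' : ν (⋃ s ∈ S, s • A) ≤ ENNReal.ofReal (1 + α) * ν A) {s : G} (hs : s ∈ S) :
    ν ((s • A) ∆ A) ≤ 2 * ENNReal.ofReal α * ν A := by
  have hdiff (g : G) (hg : g ∈ S) : ν (g • A \ A) ≤ ENNReal.ofReal α * ν A := by
    refine (ENNReal.add_le_add_iff_left (measure_ne_top ν A)).mp ?_
    calc ν A + ν (g • A \ A) = ν (A ∪ g • A) := measure_add_sdiff hA.nullMeasurableSet _
      _ ≤ ν (⋃ s ∈ S, s • A) := by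
          refine measure_mono (union_subset ?_ (subset_biUnion_of_mem (u := (· • A)) hg))
          simpa using subset_biUnion_of_mem (u := (· • A)) hS1
      _ ≤ ν A + ENNReal.ofReal α * ν A := by
          rwa [ENNReal.ofReal_add zero_le_one hα, ENNReal.ofReal_one, add_mul, one_mul] at hA'
  calc ν ((s • A) ∆ A) ≤ ν (s • A \ A) + ν (A \ s • A) := by
        rw [Set.symmDiff_def]; exact measure_union_le (μ := ν) _ _
    _ = ν (s • A \ A) + ν (s⁻¹ • A \ A) := by
        rw [← measure_smul ν s⁻¹ (A \ s • A), smul_set_sdiff, inv_smul_smul]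
    _ ≤ 2 * ENNReal.ofReal α * ν A := by
        rw [mul_assoc, two_mul]; exact add_le_add (hdiff s hs) (hdiff s⁻¹ (hSsymm s hs))

theorem IsKazhdanPair.isExpandingInMeasure [IsProbabilityMeasure ν] [MeasurableConstSMul G X]
    [SMulInvariantMeasure G X ν] {ε : ℝ} (hK : IsKazhdanPair ν S ε) (hε : 0 ≤ ε) (hS1 : 1 ∈ S)
    (hSsymm : ∀ s ∈ S, s⁻¹ ∈ S) : IsExpandingInMeasure ν S (ε ^ 2 / 8) := by
  intro A hA hA2
  by_contra! hlt
  set f : X → ℝ := fun x => A.indicator (fun _ => 1) x - ν.real A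
  have hAreal : ν.real A ≤ 1 / 2 := by
    simpa [Measure.real] using ENNReal.toReal_mono (by norm_num) hA2
  have hlower : eLpNorm (A.indicator fun _ => (2⁻¹ : ℝ)) 2 ν ≤ eLpNorm f 2 ν := by
    refine eLpNorm_mono fun x => ?_
    by_cases hx : x ∈ A
    · simp only [f, indicator_of_mem hx, Real.norm_eq_abs]
      rw [abs_of_pos (by norm_num), abs_of_pos (by linarith)]
      linarith
    · simp [hx]
  have hf : MemLp f 2 ν := ((memLp_const (1 : ℝ)).indicator hA).sub (memLp_const _)
  refine hK ⟨f, hf, ?_, ?_, fun s hs => ?_⟩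
  · rw [integral_sub ((integrable_const 1).indicator hA) (integrable_const _),
      integral_indicator hA]
    simp
  · intro hf0
    have hA0 : ‖(2⁻¹ : ℝ)‖ₑ ^ 2 * ν A = 0 := by
      rw [← eLpNorm_indicator_const_sq hA, le_antisymm (hlower.trans hf0.le) zero_le]; simp
    simp [(mul_eq_zero.mp hA0).resolve_left (by simp)] at hlt
  · have hdiff : (fun x => f (s⁻¹ • x) - f x)
        = (s • A).indicator (fun _ => 1) - A.indicator (fun _ => 1) := by
      ext x
      simp only [f, Pi.sub_apply, ← preimage_smul_inv, sub_sub_sub_cancel_right]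
      rfl
    refine (ENNReal.pow_le_pow_left_iff two_ne_zero).mp ?_
    rw [hdiff, eLpNorm_indicator_sub_indicator,
      eLpNorm_indicator_const_sq ((hA.const_smul s).symmDiff hA), mul_pow]
    calc ‖(1 : ℝ)‖ₑ ^ 2 * ν ((s • A) ∆ A)
        ≤ 2 * ENNReal.ofReal (ε ^ 2 / 8) * ν A := by
          simpa using measure_smul_symmDiff_le_of_measure_iUnion_le hS1 hSsymm (by positivity)
            hA hlt.le hs
      _ = ENNReal.ofReal ε ^ 2 * (‖(2⁻¹ : ℝ)‖ₑ ^ 2 * ν A) := by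
          rw [← mul_assoc, Real.enorm_eq_ofReal (by norm_num), ← ENNReal.ofReal_pow hε,
            ← ENNReal.ofReal_pow (by norm_num), ← ENNReal.ofReal_mul (by positivity),
            ← ENNReal.ofReal_ofNat 2, ← ENNReal.ofReal_mul (by norm_num)]
          congr 2
          ring
      _ ≤ ENNReal.ofReal ε ^ 2 * eLpNorm f 2 ν ^ 2 := by
          rw [← eLpNorm_indicator_const_sq hA]; gcongr

end

/-- Let `G` act on a probability space preserving the measure, `S ⊆ G` finite symmetric
with `1 ∈ S`, and `Γ = ⟨S⟩`.  The restricted action of `Γ` is expanding in measure if and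
only if there is `ε > 0` such that `(S,ε)` is a Kazhdan pair for the representation of
`G` on `L²_0(X)`: no nonzero zero-average `f ∈ L²` satisfies `‖s·f − f‖₂ ≤ ε‖f‖₂` for
all `s ∈ S`. -/
theorem expanding_iff_kazhdan_pair
    {G X : Type*} [Group G] [MulAction G X] [MeasurableSpace X]
    (ν : Measure X) [IsProbabilityMeasure ν]
    (hmp : ∀ g : G, MeasurePreserving (fun x => g • x) ν ν)
    (S : Finset G) (hS1 : (1 : G) ∈ S) (hSsymm : ∀ s ∈ S, s⁻¹ ∈ S) :
    (∃ α : ℝ, 0 < α ∧ ∀ A : Set X, MeasurableSet A → ν A ≤ 1 / 2 →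
        ENNReal.ofReal (1 + α) * ν A ≤ ν (⋃ s ∈ S, s • A))
      ↔ ∃ ε : ℝ, 0 < ε ∧ ¬ ∃ f : X → ℝ,
          MemLp f 2 ν ∧ (∫ x, f x ∂ν = 0) ∧ eLpNorm f 2 ν ≠ 0 ∧
          ∀ s ∈ S, eLpNorm (fun x => f (s⁻¹ • x) - f x) 2 ν
            ≤ ENNReal.ofReal ε * eLpNorm f 2 ν := by
  have : MeasurableConstSMul G X := ⟨fun g => (hmp g).measurable⟩
  have : SMulInvariantMeasure G X ν :=
    ⟨fun g _ hA => (hmp g).measure_preimage hA.nullMeasurableSet⟩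
  have hcard : (0 : ℝ) < S.card := by exact_mod_cast Finset.card_pos.mpr ⟨1, hS1⟩
  constructor
  · rintro ⟨α, hα, hexp⟩
    exact ⟨α / (4 * S.card), by positivity,
      IsExpandingInMeasure.isKazhdanPair (ν := ν) hexp hα ⟨1, hS1⟩⟩
  · rintro ⟨ε, hε, hK⟩
    exact ⟨ε ^ 2 / 8, by positivity,
      IsKazhdanPair.isExpandingInMeasure (ν := ν) hK hε.le hS1 hSsymm⟩
end
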